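/- arXiv:1302.3257 — 3 statements merged into one kernel-verified Lean document; each statement's English description precedes it below -/
import Mathlib

section
/- For the twisted product metric F(x,u,y,v) = sqrt(F₁(x,y)² + f(x,u)² F₂(u,v)²), the spray coefficients in the M₁-directions decompose as G̃^i(x,u,y,v) = G^i(x,y) − (1/2) f f^i F₂(u,v)², where G^i are the spray coefficients of F₁ and f^i = g^{ih} ∂f/∂x^h. -/
open scoped BigOperators

noncomputable section

/-- Partial derivative in the first (base) variable in coordinate direction `i`. -/
def pdx {ι κ : Type*} [Fintype ι] [DecidableEq ι]
    (i : ι) (φ : (ι → ℝ) → (κ → ℝ) → ℝ) (x : ι → ℝ) (y : κ → ℝ) : ℝ :=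
  fderiv ℝ (fun x' => φ x' y) x (Pi.single i 1)

/-- Partial derivative in the second (fiber) variable in coordinate direction `j`. -/
def pdy {ι κ : Type*} [Fintype κ] [DecidableEq κ]
    (j : κ) (φ : (ι → ℝ) → (κ → ℝ) → ℝ) (x : ι → ℝ) (y : κ → ℝ) : ℝ :=
  fderiv ℝ (fun y' => φ x y') y (Pi.single j 1)

variable {ι : Type*} [Fintype ι] [DecidableEq ι]

/-- Fundamental tensor `g_{ij}(x,y) = (1/2) ∂²F²/∂y^i∂y^j`. -/
def fTensor (F : (ι → ℝ) → (ι → ℝ) → ℝ) (i j : ι) (x y : ι → ℝ) : ℝ :=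
  (1/2) * pdy i (pdy j (fun a b => (F a b)^2)) x y

/-- Fundamental tensor as a matrix. -/
def gMat (F : (ι → ℝ) → (ι → ℝ) → ℝ) (x y : ι → ℝ) : Matrix ι ι ℝ :=
  Matrix.of fun i j => fTensor F i j x y

/-- Inverse fundamental tensor `g^{ij}`. -/
def gInv (F : (ι → ℝ) → (ι → ℝ) → ℝ) (x y : ι → ℝ) : Matrix ι ι ℝ :=
  (gMat F x y)⁻¹

/-- `F` is a Finsler metric on the open set `U ⊆ ℝ^ι`. -/
structure IsFinslerMetric (U : Set (ι → ℝ)) (F : (ι → ℝ) → (ι → ℝ) → ℝ) : Prop where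
  isOpen : IsOpen U
  nonneg : ∀ x ∈ U, ∀ y : ι → ℝ, 0 ≤ F x y
  smooth : ContDiffOn ℝ (⊤ : ℕ∞) (fun p : (ι → ℝ) × (ι → ℝ) => F p.1 p.2) (U ×ˢ {y : ι → ℝ | y ≠ 0})
  homog : ∀ x ∈ U, ∀ (y : ι → ℝ) (t : ℝ), 0 < t → F x (t • y) = t * F x y
  posdef : ∀ x ∈ U, ∀ y : ι → ℝ, y ≠ 0 → ∀ w : ι → ℝ, w ≠ 0 →
    0 < ∑ i, ∑ j, fTensor F i j x y * w i * w j

/-- Spray coefficients `G^i = (1/4) g^{il}((∂²F²/∂x^k∂y^l) y^k − ∂F²/∂x^l)`. -/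
def sprayCoef (F : (ι → ℝ) → (ι → ℝ) → ℝ) (i : ι) (x y : ι → ℝ) : ℝ :=
  (1/4) * ∑ l, gInv F x y i l *
    ((∑ k, y k * pdx k (pdy l (fun a b => (F a b)^2)) x y)
      - pdx l (fun a b => (F a b)^2) x y)

/-- Nonlinear connection coefficients `G^a_b = ∂G^a/∂y^b`. -/
def nonlinConn (F : (ι → ℝ) → (ι → ℝ) → ℝ) (a b : ι) (x y : ι → ℝ) : ℝ :=
  pdy b (sprayCoef F a) x y

/-- Cartan tensor `C_{ijk} = (1/2) ∂g_{ij}/∂y^k`. -/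
def cartan (F : (ι → ℝ) → (ι → ℝ) → ℝ) (i j k : ι) (x y : ι → ℝ) : ℝ :=
  (1/2) * pdy k (fTensor F i j) x y

/-- Cartan tensor with first index raised: `C^c_{ab} = g^{ce} C_{abe}`. -/
def cartanUp1 (F : (ι → ℝ) → (ι → ℝ) → ℝ) (c a b : ι) (x y : ι → ℝ) : ℝ :=
  ∑ e, gInv F x y c e * cartan F a b e x y

/-- Cartan tensor with two indices raised: `C^{ih}_j = g^{ir} g^{hs} C_{rsj}`. -/
def cartanUp2 (F : (ι → ℝ) → (ι → ℝ) → ℝ) (i h j : ι) (x y : ι → ℝ) : ℝ :=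
  ∑ r, ∑ s, gInv F x y i r * gInv F x y h s * cartan F r s j x y

/-- Mean Cartan torsion `I_a = g^{bc} C_{abc}`. -/
def meanCartan (F : (ι → ℝ) → (ι → ℝ) → ℝ) (a : ι) (x y : ι → ℝ) : ℝ :=
  ∑ b, ∑ c, gInv F x y b c * cartan F a b c x y

/-- Raised mean Cartan torsion `I^h = g^{hj} I_j`. -/
def meanCartanUp (F : (ι → ℝ) → (ι → ℝ) → ℝ) (h : ι) (x y : ι → ℝ) : ℝ :=
  ∑ j, gInv F x y h j * meanCartan F j x y

/-- `‖I‖² = I^a I_a`. -/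
def meanCartanNormSq (F : (ι → ℝ) → (ι → ℝ) → ℝ) (x y : ι → ℝ) : ℝ :=
  ∑ a, ∑ b, gInv F x y a b * meanCartan F a x y * meanCartan F b x y

/-- Lowered fiber variable `y_a = g_{ab} y^b`. -/
def lowerY (F : (ι → ℝ) → (ι → ℝ) → ℝ) (a : ι) (x y : ι → ℝ) : ℝ :=
  ∑ b, fTensor F a b x y * y b

/-- Angular metric `h_{ab} = g_{ab} − F^{-2} y_a y_b`. -/
def angular (F : (ι → ℝ) → (ι → ℝ) → ℝ) (a b : ι) (x y : ι → ℝ) : ℝ :=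
  fTensor F a b x y - ((F x y)^2)⁻¹ * lowerY F a x y * lowerY F b x y

/-- Matsumoto torsion (with `n` the dimension of the underlying manifold). -/
def matsumoto (n : ℕ) (F : (ι → ℝ) → (ι → ℝ) → ℝ) (a b c : ι) (x y : ι → ℝ) : ℝ :=
  cartan F a b c x y - (1/((n : ℝ)+1)) *
    (meanCartan F a x y * angular F b c x y + meanCartan F b x y * angular F a c x y
      + meanCartan F c x y * angular F a b x y)

/-- Horizontal derivative `δφ/δx^b = ∂φ/∂x^b − G^e_b ∂φ/∂y^e`. -/
def hderiv (F : (ι → ℝ) → (ι → ℝ) → ℝ) (b : ι) (φ : (ι → ℝ) → (ι → ℝ) → ℝ)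
    (x y : ι → ℝ) : ℝ :=
  pdx b φ x y - ∑ e, nonlinConn F e b x y * pdy e φ x y

/-- Berwald-type connection coefficients
`F^c_{ab} = (1/2) g^{ce}(δg_{ea}/δx^b + δg_{eb}/δx^a − δg_{ab}/δx^e)`. -/
def connCoef (F : (ι → ℝ) → (ι → ℝ) → ℝ) (c a b : ι) (x y : ι → ℝ) : ℝ :=
  (1/2) * ∑ e, gInv F x y c e *
    (hderiv F b (fTensor F e a) x y + hderiv F a (fTensor F e b) x y
      - hderiv F e (fTensor F a b) x y)

/-- Riemann curvature of the Berwald connection: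
`R^a_{b cd} = δF^a_{bc}/δx^d − δF^a_{bd}/δx^c + F^a_{de} F^e_{bc} − F^a_{ce} F^e_{bd}`. -/
def riemCurv (F : (ι → ℝ) → (ι → ℝ) → ℝ) (a b c d : ι) (x y : ι → ℝ) : ℝ :=
  hderiv F d (connCoef F a b c) x y - hderiv F c (connCoef F a b d) x y
    + (∑ e, connCoef F a d e x y * connCoef F e b c x y)
    - (∑ e, connCoef F a c e x y * connCoef F e b d x y)

/-- Berwald curvature `B^d_{abc} = ∂³G^d/∂y^a∂y^b∂y^c`. -/
def berwald (F : (ι → ℝ) → (ι → ℝ) → ℝ) (d a b c : ι) (x y : ι → ℝ) : ℝ :=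
  pdy a (pdy b (pdy c (sprayCoef F d))) x y

/-- Mean Berwald curvature `E_{ab} = (1/2) B^c_{abc}`. -/
def meanBerwald (F : (ι → ℝ) → (ι → ℝ) → ℝ) (a b : ι) (x y : ι → ℝ) : ℝ :=
  (1/2) * ∑ c, berwald F c a b c x y

/-- The twisted product metric `F(x,u,y,v) = sqrt(F₁(x,y)² + f(x,u)² F₂(u,v)²)`
on the product, with indices `Fin n₁ ⊕ Fin n₂`. -/
def twisted {n₁ n₂ : ℕ} (F₁ : (Fin n₁ → ℝ) → (Fin n₁ → ℝ) → ℝ)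
    (F₂ : (Fin n₂ → ℝ) → (Fin n₂ → ℝ) → ℝ)
    (f : (Fin n₁ → ℝ) → (Fin n₂ → ℝ) → ℝ) :
    ((Fin n₁ ⊕ Fin n₂) → ℝ) → ((Fin n₁ ⊕ Fin n₂) → ℝ) → ℝ :=
  fun X Y => Real.sqrt ((F₁ (X ∘ Sum.inl) (Y ∘ Sum.inl))^2
    + (f (X ∘ Sum.inl) (X ∘ Sum.inr))^2 * (F₂ (X ∘ Sum.inr) (Y ∘ Sum.inr))^2)

/-- Angular metric with first index raised: `h^d_a = g^{de} h_{ea}`. -/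
def angularUp (F : (ι → ℝ) → (ι → ℝ) → ℝ) (d a : ι) (x y : ι → ℝ) : ℝ :=
  ∑ e, gInv F x y d e * angular F e a x y

end


set_option linter.unusedSectionVars false
set_option maxHeartbeats 1000000

noncomputable section AuxHelpers

open Filter Topology

/-- Left projection as a continuous linear map. -/
def projL {α β : Type*} [Fintype α] [Fintype β] :
    ((α ⊕ β) → ℝ) →L[ℝ] (α → ℝ) :=
  ContinuousLinearMap.pi fun i => ContinuousLinearMap.proj (Sum.inl i)

/-- Right projection as a continuous linear map. -/
def projR {α β : Type*} [Fintype α] [Fintype β] :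
    ((α ⊕ β) → ℝ) →L[ℝ] (β → ℝ) :=
  ContinuousLinearMap.pi fun i => ContinuousLinearMap.proj (Sum.inr i)

variable {α β : Type*} [Fintype α] [Fintype β] [DecidableEq α] [DecidableEq β]

@[simp] lemma projL_apply (X : (α ⊕ β) → ℝ) : projL X = X ∘ Sum.inl := rfl
@[simp] lemma projR_apply (X : (α ⊕ β) → ℝ) : projR X = X ∘ Sum.inr := rfl

@[simp] lemma projL_single_inl (j : α) :
    projL (Pi.single (Sum.inl j) (1:ℝ) : (α ⊕ β) → ℝ) = Pi.single j 1 := by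
  funext i; simp [projL, Pi.single_apply]

@[simp] lemma projL_single_inr (j : β) :
    projL (Pi.single (Sum.inr j) (1:ℝ) : (α ⊕ β) → ℝ) = 0 := by
  funext i; simp [projL, Pi.single_apply]

@[simp] lemma projR_single_inr (j : β) :
    projR (Pi.single (Sum.inr j) (1:ℝ) : (α ⊕ β) → ℝ) = Pi.single j 1 := by
  funext i; simp [projR, Pi.single_apply]

@[simp] lemma projR_single_inl (j : α) :
    projR (Pi.single (Sum.inl j) (1:ℝ) : (α ⊕ β) → ℝ) = 0 := by
  funext i; simp [projR, Pi.single_apply]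

@[simp] lemma projL_elim (x : α → ℝ) (u : β → ℝ) : projL (Sum.elim x u) = x := rfl
@[simp] lemma projR_elim (x : α → ℝ) (u : β → ℝ) : projR (Sum.elim x u) = u := rfl

section PartialHelpers
variable {ι κ : Type*} [Fintype ι] [DecidableEq ι] [Fintype κ] [DecidableEq κ]
variable {φ : (ι → ℝ) → (κ → ℝ) → ℝ} {O : Set ((ι → ℝ) × (κ → ℝ))}
variable {x : ι → ℝ} {y : κ → ℝ}

lemma diffAt_uncurry (hφ : ContDiffOn ℝ (⊤ : ℕ∞) (fun p : (ι → ℝ) × (κ → ℝ) => φ p.1 p.2) O)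
    (hO : IsOpen O) (hp : (x, y) ∈ O) :
    DifferentiableAt ℝ (fun p : (ι → ℝ) × (κ → ℝ) => φ p.1 p.2) (x, y) :=
  (hφ.contDiffAt (hO.mem_nhds hp)).differentiableAt (by simp)

lemma hasFDerivAt_partial_y (hφ : ContDiffOn ℝ (⊤ : ℕ∞) (fun p : (ι → ℝ) × (κ → ℝ) => φ p.1 p.2) O)
    (hO : IsOpen O) (hp : (x, y) ∈ O) :
    HasFDerivAt (fun y' => φ x y')
      ((fderiv ℝ (fun p : (ι → ℝ) × (κ → ℝ) => φ p.1 p.2) (x, y)).comp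
        (ContinuousLinearMap.inr ℝ (ι → ℝ) (κ → ℝ))) y :=
  ((diffAt_uncurry hφ hO hp).hasFDerivAt).comp y (hasFDerivAt_prodMk_right x y)

lemma hasFDerivAt_partial_x (hφ : ContDiffOn ℝ (⊤ : ℕ∞) (fun p : (ι → ℝ) × (κ → ℝ) => φ p.1 p.2) O)
    (hO : IsOpen O) (hp : (x, y) ∈ O) :
    HasFDerivAt (fun x' => φ x' y)
      ((fderiv ℝ (fun p : (ι → ℝ) × (κ → ℝ) => φ p.1 p.2) (x, y)).comp
        (ContinuousLinearMap.inl ℝ (ι → ℝ) (κ → ℝ))) x :=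
  by have := ((diffAt_uncurry hφ hO hp).hasFDerivAt).comp x (hasFDerivAt_prodMk_left (𝕜 := ℝ) x y); exact this

lemma pdy_eq (hφ : ContDiffOn ℝ (⊤ : ℕ∞) (fun p : (ι → ℝ) × (κ → ℝ) => φ p.1 p.2) O)
    (hO : IsOpen O) (hp : (x, y) ∈ O) (j : κ) :
    pdy j φ x y = fderiv ℝ (fun p : (ι → ℝ) × (κ → ℝ) => φ p.1 p.2) (x, y)
      (0, Pi.single j 1) := by
  rw [pdy, (hasFDerivAt_partial_y hφ hO hp).fderiv]; rfl

lemma pdx_eq (hφ : ContDiffOn ℝ (⊤ : ℕ∞) (fun p : (ι → ℝ) × (κ → ℝ) => φ p.1 p.2) O)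
    (hO : IsOpen O) (hp : (x, y) ∈ O) (i : ι) :
    pdx i φ x y = fderiv ℝ (fun p : (ι → ℝ) × (κ → ℝ) => φ p.1 p.2) (x, y)
      (Pi.single i 1, 0) := by
  rw [pdx, (hasFDerivAt_partial_x hφ hO hp).fderiv]; rfl

lemma diffAt_fderiv_comp (hφ : ContDiffOn ℝ (⊤ : ℕ∞) (fun p : (ι → ℝ) × (κ → ℝ) => φ p.1 p.2) O)
    (hO : IsOpen O) (hp : (x, y) ∈ O)
    {E : Type*} [NormedAddCommGroup E] [NormedSpace ℝ E]
    {ψ : E → (ι → ℝ) × (κ → ℝ)} {e : E} (hψ : DifferentiableAt ℝ ψ e) (hψe : ψ e = (x, y))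
    (w : (ι → ℝ) × (κ → ℝ)) :
    DifferentiableAt ℝ
      (fun e' => fderiv ℝ (fun p : (ι → ℝ) × (κ → ℝ) => φ p.1 p.2) (ψ e') w) e := by
  have h := hφ.fderiv_of_isOpen hO (m := (⊤ : ℕ∞)) (by simp)
  have h2 : DifferentiableAt ℝ (fderiv ℝ (fun p : (ι → ℝ) × (κ → ℝ) => φ p.1 p.2)) (x, y) :=
    ((h.contDiffAt (hO.mem_nhds hp)).differentiableAt (by simp))
  exact ((hψe ▸ h2).comp e hψ).clm_apply (differentiableAt_const w)

/-- Differentiability of `y' ↦ pdy j φ x y'`. -/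
lemma diffAt_pdy_y (hφ : ContDiffOn ℝ (⊤ : ℕ∞) (fun p : (ι → ℝ) × (κ → ℝ) => φ p.1 p.2) O)
    (hO : IsOpen O) (hp : (x, y) ∈ O) (j : κ) :
    DifferentiableAt ℝ (fun y' => pdy j φ x y') y := by
  have hev : (fun y' => pdy j φ x y') =ᶠ[nhds y]
      (fun y' => fderiv ℝ (fun p : (ι → ℝ) × (κ → ℝ) => φ p.1 p.2) (x, y')
        (0, Pi.single j 1)) := by
    have : ∀ᶠ y' in nhds y, (x, y') ∈ O := by
      have hc : Continuous (fun y' : κ → ℝ => ((x, y') : (ι → ℝ) × (κ → ℝ))) :=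
        Continuous.prodMk_right x
      exact hc.continuousAt.preimage_mem_nhds (hO.mem_nhds hp)
    filter_upwards [this] with y' hy'
    exact pdy_eq hφ hO hy' j
  rw [Filter.EventuallyEq.differentiableAt_iff hev]
  exact diffAt_fderiv_comp hφ hO hp
    ((differentiableAt_const x).prodMk differentiableAt_id) rfl _

/-- Differentiability of `x' ↦ pdy j φ x' y`. -/
lemma diffAt_pdy_x (hφ : ContDiffOn ℝ (⊤ : ℕ∞) (fun p : (ι → ℝ) × (κ → ℝ) => φ p.1 p.2) O)
    (hO : IsOpen O) (hp : (x, y) ∈ O) (j : κ) :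
    DifferentiableAt ℝ (fun x' => pdy j φ x' y) x := by
  have hev : (fun x' => pdy j φ x' y) =ᶠ[nhds x]
      (fun x' => fderiv ℝ (fun p : (ι → ℝ) × (κ → ℝ) => φ p.1 p.2) (x', y)
        (0, Pi.single j 1)) := by
    have : ∀ᶠ x' in nhds x, (x', y) ∈ O := by
      have hc : Continuous (fun x' : ι → ℝ => ((x', y) : (ι → ℝ) × (κ → ℝ))) :=
        continuous_id.prodMk continuous_const
      exact hc.continuousAt.preimage_mem_nhds (hO.mem_nhds hp)
    filter_upwards [this] with x' hx'
    exact pdy_eq hφ hO hx' j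
  rw [Filter.EventuallyEq.differentiableAt_iff hev]
  exact diffAt_fderiv_comp hφ hO hp
    (differentiableAt_id.prodMk (differentiableAt_const y)) rfl _

end PartialHelpers

lemma isUnit_det_of_pos {ι : Type*} [Fintype ι] [DecidableEq ι] (M : Matrix ι ι ℝ)
    (h : ∀ w : ι → ℝ, w ≠ 0 → 0 < ∑ i, ∑ j, M i j * w i * w j) : IsUnit M.det := by
  rw [← Matrix.isUnit_iff_isUnit_det, ← Matrix.mulVec_injective_iff_isUnit]
  intro a b hab
  by_contra hne
  have hw : a - b ≠ 0 := sub_ne_zero.mpr hne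
  have h0 : M.mulVec (a - b) = 0 := by rw [Matrix.mulVec_sub, hab, sub_self]
  have hpos := h _ hw
  have hzero : ∑ i, ∑ j, M i j * (a - b) i * (a - b) j = 0 := by
    have hrow : ∀ i, ∑ j, M i j * (a - b) i * (a - b) j = (a - b) i * M.mulVec (a - b) i := by
      intro i
      simp only [Matrix.mulVec, dotProduct, Finset.mul_sum]
      apply Finset.sum_congr rfl
      intro j _; ring
    rw [Finset.sum_congr rfl fun i _ => hrow i]
    simp [h0]
  exact absurd hzero (ne_of_gt hpos)

lemma blockInv {m n : Type*} [Fintype m] [Fintype n] [DecidableEq m] [DecidableEq n]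
    (A : Matrix m m ℝ) (D : Matrix n n ℝ) (hA : IsUnit A.det) (hD : IsUnit D.det) :
    (Matrix.fromBlocks A 0 0 D)⁻¹ = Matrix.fromBlocks A⁻¹ 0 0 D⁻¹ := by
  apply Matrix.inv_eq_right_inv
  rw [Matrix.fromBlocks_multiply]
  simp [Matrix.mul_nonsing_inv A hA, Matrix.mul_nonsing_inv D hD, Matrix.fromBlocks_one]

end AuxHelpers

noncomputable section AuxHelpers2
variable {α β : Type*} [Fintype α] [Fintype β] [DecidableEq α] [DecidableEq β]
@[simp] lemma single_inl_comp_inl (j : α) :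
    (Pi.single (Sum.inl j) (1:ℝ) : (α ⊕ β) → ℝ) ∘ Sum.inl = Pi.single j 1 := by
  funext i; simp [Pi.single_apply, Function.comp]
@[simp] lemma single_inl_comp_inr (j : α) :
    (Pi.single (Sum.inl j) (1:ℝ) : (α ⊕ β) → ℝ) ∘ Sum.inr = 0 := by
  funext i; simp [Pi.single_apply, Function.comp]
@[simp] lemma single_inr_comp_inl (j : β) :
    (Pi.single (Sum.inr j) (1:ℝ) : (α ⊕ β) → ℝ) ∘ Sum.inl = 0 := by
  funext i; simp [Pi.single_apply, Function.comp]
@[simp] lemma single_inr_comp_inr (j : β) :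
    (Pi.single (Sum.inr j) (1:ℝ) : (α ⊕ β) → ℝ) ∘ Sum.inr = Pi.single j 1 := by
  funext i; simp [Pi.single_apply, Function.comp]
end AuxHelpers2

set_option maxHeartbeats 2000000 in
open Filter Topology in
theorem stmt_0 {n₁ n₂ : ℕ} {U₁ : Set (Fin n₁ → ℝ)} {U₂ : Set (Fin n₂ → ℝ)}
    {F₁ : (Fin n₁ → ℝ) → (Fin n₁ → ℝ) → ℝ}
    {F₂ : (Fin n₂ → ℝ) → (Fin n₂ → ℝ) → ℝ}
    {f : (Fin n₁ → ℝ) → (Fin n₂ → ℝ) → ℝ}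
    (hF₁ : IsFinslerMetric U₁ F₁) (hF₂ : IsFinslerMetric U₂ F₂)
    (hf : ContDiffOn ℝ (⊤ : ℕ∞) (fun p : (Fin n₁ → ℝ) × (Fin n₂ → ℝ) => f p.1 p.2) (U₁ ×ˢ U₂))
    (hfpos : ∀ x ∈ U₁, ∀ u ∈ U₂, 0 < f x u)
 :
    ∀ x ∈ U₁, ∀ u ∈ U₂, ∀ (y : Fin n₁ → ℝ) (v : Fin n₂ → ℝ), y ≠ 0 → v ≠ 0 →
      ∀ i : Fin n₁,
        sprayCoef (twisted F₁ F₂ f) (Sum.inl i) (Sum.elim x u) (Sum.elim y v)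
          = sprayCoef F₁ i x y
            - (1/2) * f x u * (∑ h, gInv F₁ x y i h * pdx h f x u) * (F₂ u v)^2 := by
  intro x hx u hu y v hy hv i
  classical
  set X : (Fin n₁ ⊕ Fin n₂) → ℝ := Sum.elim x u with hXdef
  set Y : (Fin n₁ ⊕ Fin n₂) → ℝ := Sum.elim y v with hYdef
  have hO₁ : IsOpen (U₁ ×ˢ {b : Fin n₁ → ℝ | b ≠ 0}) := hF₁.isOpen.prod isOpen_ne
  have hO₂ : IsOpen (U₂ ×ˢ {b : Fin n₂ → ℝ | b ≠ 0}) := hF₂.isOpen.prod isOpen_ne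
  have hOf : IsOpen (U₁ ×ˢ U₂) := hF₁.isOpen.prod hF₂.isOpen
  have hS₁ : ContDiffOn ℝ (⊤ : ℕ∞)
      (fun p : (Fin n₁ → ℝ) × (Fin n₁ → ℝ) => F₁ p.1 p.2 ^ 2)
      (U₁ ×ˢ {b : Fin n₁ → ℝ | b ≠ 0}) := hF₁.smooth.pow 2
  have hS₂ : ContDiffOn ℝ (⊤ : ℕ∞)
      (fun p : (Fin n₂ → ℝ) × (Fin n₂ → ℝ) => F₂ p.1 p.2 ^ 2)
      (U₂ ×ˢ {b : Fin n₂ → ℝ | b ≠ 0}) := hF₂.smooth.pow 2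
  -- pointwise formula for the square of the twisted metric
  have hfun : ∀ X' Y' : (Fin n₁ ⊕ Fin n₂) → ℝ,
      twisted F₁ F₂ f X' Y' ^ 2 =
        F₁ (X' ∘ Sum.inl) (Y' ∘ Sum.inl) ^ 2 +
          f (X' ∘ Sum.inl) (X' ∘ Sum.inr) ^ 2 * F₂ (X' ∘ Sum.inr) (Y' ∘ Sum.inr) ^ 2 := by
    intro X' Y'
    rw [twisted]
    exact Real.sq_sqrt (by positivity)
  -- derivative of the square in the fiber variable
  have key_y : ∀ X' Y' : (Fin n₁ ⊕ Fin n₂) → ℝ, X' ∘ Sum.inl ∈ U₁ → X' ∘ Sum.inr ∈ U₂ →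
      Y' ∘ Sum.inl ≠ 0 → Y' ∘ Sum.inr ≠ 0 →
      HasFDerivAt (fun Y'' => twisted F₁ F₂ f X' Y'' ^ 2)
        (((fderiv ℝ (fun b => F₁ (X' ∘ Sum.inl) b ^ 2) (Y' ∘ Sum.inl)).comp projL) +
          f (X' ∘ Sum.inl) (X' ∘ Sum.inr) ^ 2 •
            ((fderiv ℝ (fun b => F₂ (X' ∘ Sum.inr) b ^ 2) (Y' ∘ Sum.inr)).comp projR)) Y' := by
    intro X' Y' h1 h2 h3 h4
    have hfe : (fun Y'' => twisted F₁ F₂ f X' Y'' ^ 2) =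
        fun Y'' : (Fin n₁ ⊕ Fin n₂) → ℝ =>
          (fun b => F₁ (X' ∘ Sum.inl) b ^ 2) (projL Y'') +
            f (X' ∘ Sum.inl) (X' ∘ Sum.inr) ^ 2 *
              (fun b => F₂ (X' ∘ Sum.inr) b ^ 2) (projR Y'') :=
      funext fun Y'' => hfun X' Y''
    rw [hfe]
    have d1 : DifferentiableAt ℝ (fun b => F₁ (X' ∘ Sum.inl) b ^ 2) (Y' ∘ Sum.inl) :=
      (hasFDerivAt_partial_y (φ := fun a b => F₁ a b ^ 2) hS₁ hO₁ ⟨h1, h3⟩).differentiableAt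
    have d2 : DifferentiableAt ℝ (fun b => F₂ (X' ∘ Sum.inr) b ^ 2) (Y' ∘ Sum.inr) :=
      (hasFDerivAt_partial_y (φ := fun a b => F₂ a b ^ 2) hS₂ hO₂ ⟨h2, h4⟩).differentiableAt
    exact (d1.hasFDerivAt.comp Y' projL.hasFDerivAt).add
      ((d2.hasFDerivAt.comp Y' projR.hasFDerivAt).const_mul _)
  -- values of fiber partials of the square
  have pdy_inl : ∀ X' Y' : (Fin n₁ ⊕ Fin n₂) → ℝ, X' ∘ Sum.inl ∈ U₁ → X' ∘ Sum.inr ∈ U₂ →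
      Y' ∘ Sum.inl ≠ 0 → Y' ∘ Sum.inr ≠ 0 → ∀ l : Fin n₁,
      pdy (Sum.inl l) (fun a b => twisted F₁ F₂ f a b ^ 2) X' Y'
        = pdy l (fun a b => F₁ a b ^ 2) (X' ∘ Sum.inl) (Y' ∘ Sum.inl) := by
    intro X' Y' h1 h2 h3 h4 l
    rw [pdy, (key_y X' Y' h1 h2 h3 h4).fderiv]
    simp [pdy]
  have pdy_inr : ∀ X' Y' : (Fin n₁ ⊕ Fin n₂) → ℝ, X' ∘ Sum.inl ∈ U₁ → X' ∘ Sum.inr ∈ U₂ →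
      Y' ∘ Sum.inl ≠ 0 → Y' ∘ Sum.inr ≠ 0 → ∀ β : Fin n₂,
      pdy (Sum.inr β) (fun a b => twisted F₁ F₂ f a b ^ 2) X' Y'
        = f (X' ∘ Sum.inl) (X' ∘ Sum.inr) ^ 2 *
            pdy β (fun a b => F₂ a b ^ 2) (X' ∘ Sum.inr) (Y' ∘ Sum.inr) := by
    intro X' Y' h1 h2 h3 h4 β
    rw [pdy, (key_y X' Y' h1 h2 h3 h4).fderiv]
    simp [pdy]
  -- eventual membership
  have hevY : ∀ᶠ Y' in 𝓝 Y, Y' ∘ Sum.inl ≠ (0 : Fin n₁ → ℝ) ∧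
      Y' ∘ Sum.inr ≠ (0 : Fin n₂ → ℝ) := by
    have h1 : ∀ᶠ Y' in 𝓝 Y, Y' ∘ Sum.inl ≠ (0 : Fin n₁ → ℝ) := by
      have hcont : Continuous fun Y' : (Fin n₁ ⊕ Fin n₂) → ℝ => Y' ∘ Sum.inl :=
        projL.continuous
      exact hcont.continuousAt.eventually_ne hy
    have h2 : ∀ᶠ Y' in 𝓝 Y, Y' ∘ Sum.inr ≠ (0 : Fin n₂ → ℝ) := by
      have hcont : Continuous fun Y' : (Fin n₁ ⊕ Fin n₂) → ℝ => Y' ∘ Sum.inr :=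
        projR.continuous
      exact hcont.continuousAt.eventually_ne hv
    exact h1.and h2
  have hevX : ∀ᶠ X' in 𝓝 X, X' ∘ Sum.inl ∈ U₁ ∧ X' ∘ Sum.inr ∈ U₂ := by
    have h1 : ∀ᶠ X' in 𝓝 X, X' ∘ Sum.inl ∈ U₁ := by
      have hcont : Continuous fun X' : (Fin n₁ ⊕ Fin n₂) → ℝ => X' ∘ Sum.inl :=
        projL.continuous
      exact hcont.continuousAt.preimage_mem_nhds (hF₁.isOpen.mem_nhds hx)
    have h2 : ∀ᶠ X' in 𝓝 X, X' ∘ Sum.inr ∈ U₂ := by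
      have hcont : Continuous fun X' : (Fin n₁ ⊕ Fin n₂) → ℝ => X' ∘ Sum.inr :=
        projR.continuous
      exact hcont.continuousAt.preimage_mem_nhds (hF₂.isOpen.mem_nhds hu)
    exact h1.and h2
  have hXl : X ∘ Sum.inl = x := rfl
  have hXr : X ∘ Sum.inr = u := rfl
  have hYl : Y ∘ Sum.inl = y := rfl
  have hYr : Y ∘ Sum.inr = v := rfl
  -- fundamental tensor entries of the twisted metric
  have fT_ll : ∀ i' j' : Fin n₁,
      fTensor (twisted F₁ F₂ f) (Sum.inl i') (Sum.inl j') X Y = fTensor F₁ i' j' x y := by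
    intro i' j'
    have hev : (fun Y' => pdy (Sum.inl j') (fun a b => twisted F₁ F₂ f a b ^ 2) X Y')
        =ᶠ[𝓝 Y] (fun Y' => pdy j' (fun a b => F₁ a b ^ 2) x (projL Y')) := by
      filter_upwards [hevY] with Y' hY'
      rw [pdy_inl X Y' hx hu hY'.1 hY'.2 j', hXl]
      rfl
    have dg : DifferentiableAt ℝ (fun b => pdy j' (fun a b => F₁ a b ^ 2) x b) y :=
      diffAt_pdy_y (φ := fun a b => F₁ a b ^ 2) hS₁ hO₁ ⟨hx, hy⟩ j'
    rw [fTensor, pdy, hev.fderiv_eq,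
      show (fun Y' => pdy j' (fun a b => F₁ a b ^ 2) x (projL Y'))
        = ((fun b => pdy j' (fun a b => F₁ a b ^ 2) x b) ∘ ⇑projL) from rfl,
      (dg.hasFDerivAt.comp Y projL.hasFDerivAt).fderiv]
    simp [fTensor, pdy]
  have fT_lr : ∀ (i' : Fin n₁) (β : Fin n₂),
      fTensor (twisted F₁ F₂ f) (Sum.inl i') (Sum.inr β) X Y = 0 := by
    intro i' β
    have hev : (fun Y' => pdy (Sum.inr β) (fun a b => twisted F₁ F₂ f a b ^ 2) X Y')
        =ᶠ[𝓝 Y] (fun Y' => f x u ^ 2 * pdy β (fun a b => F₂ a b ^ 2) u (projR Y')) := by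
      filter_upwards [hevY] with Y' hY'
      rw [pdy_inr X Y' hx hu hY'.1 hY'.2 β, hXl, hXr]
      rfl
    have dg : DifferentiableAt ℝ (fun b => pdy β (fun a b => F₂ a b ^ 2) u b) v :=
      diffAt_pdy_y (φ := fun a b => F₂ a b ^ 2) hS₂ hO₂ ⟨hu, hv⟩ β
    rw [fTensor, pdy, hev.fderiv_eq,
      show (fun Y' => f x u ^ 2 * pdy β (fun a b => F₂ a b ^ 2) u (projR Y'))
        = (fun Y' => f x u ^ 2 *
            ((fun b => pdy β (fun a b => F₂ a b ^ 2) u b) ∘ ⇑projR) Y') from rfl,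
      ((dg.hasFDerivAt.comp Y projR.hasFDerivAt).const_mul (f x u ^ 2)).fderiv]
    simp
  have fT_rl : ∀ (ap : Fin n₂) (j' : Fin n₁),
      fTensor (twisted F₁ F₂ f) (Sum.inr ap) (Sum.inl j') X Y = 0 := by
    intro ap j'
    have hev : (fun Y' => pdy (Sum.inl j') (fun a b => twisted F₁ F₂ f a b ^ 2) X Y')
        =ᶠ[𝓝 Y] (fun Y' => pdy j' (fun a b => F₁ a b ^ 2) x (projL Y')) := by
      filter_upwards [hevY] with Y' hY'
      rw [pdy_inl X Y' hx hu hY'.1 hY'.2 j', hXl]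
      rfl
    have dg : DifferentiableAt ℝ (fun b => pdy j' (fun a b => F₁ a b ^ 2) x b) y :=
      diffAt_pdy_y (φ := fun a b => F₁ a b ^ 2) hS₁ hO₁ ⟨hx, hy⟩ j'
    rw [fTensor, pdy, hev.fderiv_eq,
      show (fun Y' => pdy j' (fun a b => F₁ a b ^ 2) x (projL Y'))
        = ((fun b => pdy j' (fun a b => F₁ a b ^ 2) x b) ∘ ⇑projL) from rfl,
      (dg.hasFDerivAt.comp Y projL.hasFDerivAt).fderiv]
    simp
  have fT_rr : ∀ ap β : Fin n₂,
      fTensor (twisted F₁ F₂ f) (Sum.inr ap) (Sum.inr β) X Y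
        = f x u ^ 2 * fTensor F₂ ap β u v := by
    intro ap β
    have hev : (fun Y' => pdy (Sum.inr β) (fun a b => twisted F₁ F₂ f a b ^ 2) X Y')
        =ᶠ[𝓝 Y] (fun Y' => f x u ^ 2 * pdy β (fun a b => F₂ a b ^ 2) u (projR Y')) := by
      filter_upwards [hevY] with Y' hY'
      rw [pdy_inr X Y' hx hu hY'.1 hY'.2 β, hXl, hXr]
      rfl
    have dg : DifferentiableAt ℝ (fun b => pdy β (fun a b => F₂ a b ^ 2) u b) v :=
      diffAt_pdy_y (φ := fun a b => F₂ a b ^ 2) hS₂ hO₂ ⟨hu, hv⟩ β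
    rw [fTensor, pdy, hev.fderiv_eq,
      show (fun Y' => f x u ^ 2 * pdy β (fun a b => F₂ a b ^ 2) u (projR Y'))
        = (fun Y' => f x u ^ 2 *
            ((fun b => pdy β (fun a b => F₂ a b ^ 2) u b) ∘ ⇑projR) Y') from rfl,
      ((dg.hasFDerivAt.comp Y projR.hasFDerivAt).const_mul (f x u ^ 2)).fderiv]
    simp [fTensor, pdy]
    ring
  -- block structure of the fundamental tensor
  have hgM : gMat (twisted F₁ F₂ f) X Y
      = Matrix.fromBlocks (gMat F₁ x y) 0 0 (f x u ^ 2 • gMat F₂ u v) := by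
    ext a b
    cases a with
    | inl a => cases b with
      | inl b => simpa [gMat, Matrix.fromBlocks] using fT_ll a b
      | inr b => simpa [gMat, Matrix.fromBlocks] using fT_lr a b
    | inr a => cases b with
      | inl b => simpa [gMat, Matrix.fromBlocks] using fT_rl a b
      | inr b => simpa [gMat, Matrix.fromBlocks] using fT_rr a b
  have hdetA : IsUnit (gMat F₁ x y).det :=
    isUnit_det_of_pos _ (fun w hw => hF₁.posdef x hx y hy w hw)
  have hdetD : IsUnit (f x u ^ 2 • gMat F₂ u v).det := by
    apply isUnit_det_of_pos
    intro w hw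
    have hp := hF₂.posdef u hu v hv w hw
    have hc : (0:ℝ) < f x u ^ 2 := pow_pos (hfpos x hx u hu) 2
    have heq : ∑ a, ∑ b, (f x u ^ 2 • gMat F₂ u v) a b * w a * w b
        = f x u ^ 2 * ∑ a, ∑ b, gMat F₂ u v a b * w a * w b := by
      simp only [Matrix.smul_apply, smul_eq_mul, Finset.mul_sum]
      exact Finset.sum_congr rfl fun a _ => Finset.sum_congr rfl fun b _ => by ring
    rw [heq]
    exact mul_pos hc hp
  have hgInv : gInv (twisted F₁ F₂ f) X Y
      = Matrix.fromBlocks (gInv F₁ x y) 0 0 (f x u ^ 2 • gMat F₂ u v)⁻¹ := by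
    rw [gInv, hgM, blockInv _ _ hdetA hdetD]; rfl
  -- mixed second derivatives ∂x∂y of the square at the base point
  have pdx_pdy_inl : ∀ l k : Fin n₁,
      pdx (Sum.inl k) (pdy (Sum.inl l) (fun a b => twisted F₁ F₂ f a b ^ 2)) X Y
        = pdx k (pdy l (fun a b => F₁ a b ^ 2)) x y := by
    intro l k
    have hev : (fun X' => pdy (Sum.inl l) (fun a b => twisted F₁ F₂ f a b ^ 2) X' Y)
        =ᶠ[𝓝 X] (fun X' => pdy l (fun a b => F₁ a b ^ 2) (projL X') y) := by
      filter_upwards [hevX] with X' hX'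
      rw [pdy_inl X' Y hX'.1 hX'.2 hy hv l, hYl]
      rfl
    have dg : DifferentiableAt ℝ (fun a => pdy l (fun a b => F₁ a b ^ 2) a y) x :=
      diffAt_pdy_x (φ := fun a b => F₁ a b ^ 2) hS₁ hO₁ ⟨hx, hy⟩ l
    rw [pdx, hev.fderiv_eq,
      show (fun X' => pdy l (fun a b => F₁ a b ^ 2) (projL X') y)
        = ((fun a => pdy l (fun a b => F₁ a b ^ 2) a y) ∘ ⇑projL) from rfl,
      (dg.hasFDerivAt.comp X projL.hasFDerivAt).fderiv]
    simp [pdx]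
  have pdx_pdy_inr : ∀ (l : Fin n₁) (κ : Fin n₂),
      pdx (Sum.inr κ) (pdy (Sum.inl l) (fun a b => twisted F₁ F₂ f a b ^ 2)) X Y = 0 := by
    intro l κ
    have hev : (fun X' => pdy (Sum.inl l) (fun a b => twisted F₁ F₂ f a b ^ 2) X' Y)
        =ᶠ[𝓝 X] (fun X' => pdy l (fun a b => F₁ a b ^ 2) (projL X') y) := by
      filter_upwards [hevX] with X' hX'
      rw [pdy_inl X' Y hX'.1 hX'.2 hy hv l, hYl]
      rfl
    have dg : DifferentiableAt ℝ (fun a => pdy l (fun a b => F₁ a b ^ 2) a y) x :=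
      diffAt_pdy_x (φ := fun a b => F₁ a b ^ 2) hS₁ hO₁ ⟨hx, hy⟩ l
    rw [pdx, hev.fderiv_eq,
      show (fun X' => pdy l (fun a b => F₁ a b ^ 2) (projL X') y)
        = ((fun a => pdy l (fun a b => F₁ a b ^ 2) a y) ∘ ⇑projL) from rfl,
      (dg.hasFDerivAt.comp X projL.hasFDerivAt).fderiv]
    simp
  -- base partial of the square at the base point
  have key_x : ∀ l : Fin n₁,
      pdx (Sum.inl l) (fun a b => twisted F₁ F₂ f a b ^ 2) X Y
        = pdx l (fun a b => F₁ a b ^ 2) x y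
          + 2 * f x u * pdx l f x u * F₂ u v ^ 2 := by
    have hdf := (diffAt_uncurry (φ := f) hf hOf ⟨hx, hu⟩).hasFDerivAt
    have hpair : HasFDerivAt
        (fun X' : (Fin n₁ ⊕ Fin n₂) → ℝ => ((X' ∘ Sum.inl, X' ∘ Sum.inr) :
          (Fin n₁ → ℝ) × (Fin n₂ → ℝ))) (projL.prod projR) X :=
      by exact (projL.prod projR).hasFDerivAt (x := X)
    have hfp : HasFDerivAt (fun X' : (Fin n₁ ⊕ Fin n₂) → ℝ => f (X' ∘ Sum.inl) (X' ∘ Sum.inr))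
        ((fderiv ℝ (fun p : (Fin n₁ → ℝ) × (Fin n₂ → ℝ) => f p.1 p.2) (x, u)).comp
          (projL.prod projR)) X :=
      by have := hdf.comp X hpair; exact this
    have d1 : DifferentiableAt ℝ (fun a => F₁ a y ^ 2) x :=
      (hasFDerivAt_partial_x (φ := fun a b => F₁ a b ^ 2) hS₁ hO₁ ⟨hx, hy⟩).differentiableAt
    have d3 : DifferentiableAt ℝ (fun a => F₂ a v ^ 2) u :=
      (hasFDerivAt_partial_x (φ := fun a b => F₂ a b ^ 2) hS₂ hO₂ ⟨hu, hv⟩).differentiableAt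
    have h1 := d1.hasFDerivAt.comp X projL.hasFDerivAt
    have h3 := d3.hasFDerivAt.comp X projR.hasFDerivAt
    have hsq2 := hfp.mul hfp
    have hprod := hsq2.mul h3
    have htot := h1.add hprod
    have hfun2 : ∀ X' : (Fin n₁ ⊕ Fin n₂) → ℝ,
        twisted F₁ F₂ f X' Y ^ 2 =
          F₁ (X' ∘ Sum.inl) y ^ 2 +
            f (X' ∘ Sum.inl) (X' ∘ Sum.inr) ^ 2 * F₂ (X' ∘ Sum.inr) v ^ 2 :=
      fun X' => hfun X' Y
    have hfeq : (fun X' => twisted F₁ F₂ f X' Y ^ 2)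
        = fun X' : (Fin n₁ ⊕ Fin n₂) → ℝ =>
            ((fun a => F₁ a y ^ 2) ∘ ⇑projL) X' +
              ((fun X'' : (Fin n₁ ⊕ Fin n₂) → ℝ => f (X'' ∘ Sum.inl) (X'' ∘ Sum.inr)) X' *
                  (fun X'' : (Fin n₁ ⊕ Fin n₂) → ℝ => f (X'' ∘ Sum.inl) (X'' ∘ Sum.inr)) X') *
                ((fun a => F₂ a v ^ 2) ∘ ⇑projR) X' := by
      funext X'
      rw [hfun2 X']
      simp only [Function.comp, projL_apply, projR_apply]
      ring
    intro l
    rw [pdx, hfeq]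
    refine (congrArg (fun L => L (Pi.single (Sum.inl l) 1)) htot.fderiv).trans ?_
    have hfx : pdx l f x u = fderiv ℝ (fun p : (Fin n₁ → ℝ) × (Fin n₂ → ℝ) => f p.1 p.2) (x, u)
        (Pi.single l 1, 0) := pdx_eq (φ := f) hf hOf ⟨hx, hu⟩ l
    have hF1x : pdx l (fun a b => F₁ a b ^ 2) x y
        = fderiv ℝ (fun a => F₁ a y ^ 2) x (Pi.single l 1) := rfl
    rw [hF1x, hfx]
    simp [ContinuousLinearMap.prod_apply]
    rw [hXl, hXr]
    ring
  -- the two gInv rows we need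
  have hgii : ∀ l : Fin n₁,
      gInv (twisted F₁ F₂ f) X Y (Sum.inl i) (Sum.inl l) = gInv F₁ x y i l := by
    intro l; rw [hgInv]; rfl
  have hgir : ∀ β : Fin n₂,
      gInv (twisted F₁ F₂ f) X Y (Sum.inl i) (Sum.inr β) = 0 := by
    intro β; rw [hgInv]; simp [Matrix.fromBlocks]
  -- assembling the spray coefficient
  rw [sprayCoef, sprayCoef, Fintype.sum_sum_type]
  have hterm2 : ∑ β : Fin n₂, gInv (twisted F₁ F₂ f) X Y (Sum.inl i) (Sum.inr β) *
      ((∑ k, Y k * pdx k (pdy (Sum.inr β) (fun a b => twisted F₁ F₂ f a b ^ 2)) X Y)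
        - pdx (Sum.inr β) (fun a b => twisted F₁ F₂ f a b ^ 2) X Y) = 0 := by
    apply Finset.sum_eq_zero
    intro β _
    rw [hgir β, zero_mul]
  have hterm1 : ∑ l : Fin n₁, gInv (twisted F₁ F₂ f) X Y (Sum.inl i) (Sum.inl l) *
      ((∑ k, Y k * pdx k (pdy (Sum.inl l) (fun a b => twisted F₁ F₂ f a b ^ 2)) X Y)
        - pdx (Sum.inl l) (fun a b => twisted F₁ F₂ f a b ^ 2) X Y)
      = (∑ l, gInv F₁ x y i l *
          ((∑ k, y k * pdx k (pdy l (fun a b => F₁ a b ^ 2)) x y)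
            - pdx l (fun a b => F₁ a b ^ 2) x y))
        - 2 * f x u * F₂ u v ^ 2 * ∑ l, gInv F₁ x y i l * pdx l f x u := by
    have hstep : ∀ l : Fin n₁, l ∈ Finset.univ →
        gInv (twisted F₁ F₂ f) X Y (Sum.inl i) (Sum.inl l) *
          ((∑ k, Y k * pdx k (pdy (Sum.inl l) (fun a b => twisted F₁ F₂ f a b ^ 2)) X Y)
            - pdx (Sum.inl l) (fun a b => twisted F₁ F₂ f a b ^ 2) X Y)
        = gInv F₁ x y i l *
            ((∑ k, y k * pdx k (pdy l (fun a b => F₁ a b ^ 2)) x y)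
              - pdx l (fun a b => F₁ a b ^ 2) x y)
          - 2 * f x u * F₂ u v ^ 2 * (gInv F₁ x y i l * pdx l f x u) := by
      intro l _
      rw [hgii l, key_x l, Fintype.sum_sum_type]
      have e1 : ∑ k : Fin n₁, Y (Sum.inl k) *
          pdx (Sum.inl k) (pdy (Sum.inl l) (fun a b => twisted F₁ F₂ f a b ^ 2)) X Y
          = ∑ k : Fin n₁, y k * pdx k (pdy l (fun a b => F₁ a b ^ 2)) x y := by
        apply Finset.sum_congr rfl
        intro k _
        rw [pdx_pdy_inl l k]
        rfl
      have e2 : ∑ κ : Fin n₂, Y (Sum.inr κ) *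
          pdx (Sum.inr κ) (pdy (Sum.inl l) (fun a b => twisted F₁ F₂ f a b ^ 2)) X Y = 0 := by
        apply Finset.sum_eq_zero
        intro κ _
        rw [pdx_pdy_inr l κ, mul_zero]
      rw [e1, e2]
      ring
    rw [Finset.sum_congr rfl hstep, Finset.sum_sub_distrib, ← Finset.mul_sum]
  rw [hterm1, hterm2]
  ring
end

section
/- For the twisted product metric F(x,u,y,v) = sqrt(F₁(x,y)² + f(x,u)² F₂(u,v)²), the spray coefficients in the M₂-directions decompose as G̃^α(x,u,y,v) = G^α(u,v) + f^{-1}( f_j v^α y^j + f_λ v^α v^λ − (1/2) f_γ g^{αγ} F₂(u,v)² ), where G^α are the spray coefficients of F₂. -/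
open scoped BigOperators

noncomputable section Aux

open ContinuousLinearMap Filter

variable {ι : Type*} [Fintype ι] [DecidableEq ι]

section Slice

variable {E G : Type*} [NormedAddCommGroup E] [NormedSpace ℝ E]
  [NormedAddCommGroup G] [NormedSpace ℝ G]

lemma diffAt_slice_right {Φ : E × G → ℝ} {a : E} {b : G} (h : DifferentiableAt ℝ Φ (a, b)) :
    DifferentiableAt ℝ (fun y => Φ (a, y)) b :=
  h.comp b ((differentiableAt_const a).prodMk differentiableAt_id)

lemma diffAt_slice_left {Φ : E × G → ℝ} {a : E} {b : G} (h : DifferentiableAt ℝ Φ (a, b)) :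
    DifferentiableAt ℝ (fun x => Φ (x, b)) a :=
  h.comp a (differentiableAt_id.prodMk (differentiableAt_const b))

lemma fderiv_slice_right {Φ : E × G → ℝ} {a : E} {b : G} (h : DifferentiableAt ℝ Φ (a, b))
    (w : G) : fderiv ℝ (fun y => Φ (a, y)) b w = fderiv ℝ Φ (a, b) (0, w) := by
  have h2 := (h.hasFDerivAt.comp b (hasFDerivAt_prodMk_right a b)).fderiv
  rw [show (fun y => Φ (a, y)) = (Φ ∘ fun y => (a, y)) from rfl, h2]
  simp

lemma fderiv_slice_left {Φ : E × G → ℝ} {a : E} {b : G} (h : DifferentiableAt ℝ Φ (a, b))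
    (w : E) : fderiv ℝ (fun x => Φ (x, b)) a w = fderiv ℝ Φ (a, b) (w, 0) := by
  have h2 := (h.hasFDerivAt.comp a (hasFDerivAt_prodMk_left (𝕜 := ℝ) a b)).fderiv
  rw [show (fun x => Φ (x, b)) = (Φ ∘ fun x => (x, b)) from rfl, h2]
  simp

end Slice

lemma clm_apply_eq_sum (L : (ι → ℝ) →L[ℝ] ℝ) (w : ι → ℝ) :
    L w = ∑ γ, w γ * L (Pi.single γ 1) := by
  have hw : w = ∑ γ, w γ • (Pi.single γ 1 : ι → ℝ) := by
    funext i
    simp [Finset.sum_apply, Pi.single_apply]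
  conv_lhs => rw [hw]
  rw [map_sum]
  exact Finset.sum_congr rfl fun γ _ => by rw [map_smul]; rfl

end Aux

noncomputable section Metric

open ContinuousLinearMap Filter

variable {ι : Type*} [Fintype ι] [DecidableEq ι]
variable {U : Set (ι → ℝ)} {F : (ι → ℝ) → (ι → ℝ) → ℝ}

/-- joint squared metric -/
def QJ (F : (ι → ℝ) → (ι → ℝ) → ℝ) : (ι → ℝ) × (ι → ℝ) → ℝ := fun p => (F p.1 p.2) ^ 2

/-- joint fiber partial of the squared metric -/
def Dhat (F : (ι → ℝ) → (ι → ℝ) → ℝ) [DecidableEq ι] (j : ι) : (ι → ℝ) × (ι → ℝ) → ℝ :=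
  fun p => fderiv ℝ (QJ F) p (0, Pi.single j 1)

variable (hF : IsFinslerMetric U F)
include hF

lemma sOpen : IsOpen (U ×ˢ {y : ι → ℝ | y ≠ 0}) := hF.isOpen.prod isOpen_ne

lemma QJ_contDiffOn : ContDiffOn ℝ (⊤ : ℕ∞) (QJ F) (U ×ˢ {y : ι → ℝ | y ≠ 0}) :=
  (hF.smooth.of_le (by simp)).pow 2

lemma QJ_diffAt {x y : ι → ℝ} (hx : x ∈ U) (hy : y ≠ 0) : DifferentiableAt ℝ (QJ F) (x, y) := by
  have h : ContDiffAt ℝ (⊤ : ℕ∞) (QJ F) (x, y) :=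
    (QJ_contDiffOn hF).contDiffAt ((sOpen hF).mem_nhds (Set.mk_mem_prod hx hy))
  exact h.differentiableAt (by simp)

lemma fderivQJ_contDiffOn : ContDiffOn ℝ (⊤ : ℕ∞) (fderiv ℝ (QJ F)) (U ×ˢ {y : ι → ℝ | y ≠ 0}) :=
  (QJ_contDiffOn hF).fderiv_of_isOpen (sOpen hF) (by exact_mod_cast le_top)

lemma Dhat_diffAt {x y : ι → ℝ} (hx : x ∈ U) (hy : y ≠ 0) (j : ι) :
    DifferentiableAt ℝ (Dhat F j) (x, y) := by
  have h : ContDiffAt ℝ (⊤ : ℕ∞) (fderiv ℝ (QJ F)) (x, y) :=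
    (fderivQJ_contDiffOn hF).contDiffAt ((sOpen hF).mem_nhds (Set.mk_mem_prod hx hy))
  exact (h.clm_apply contDiffAt_const).differentiableAt (by simp)

lemma pdy_eq_Dhat {x y : ι → ℝ} (hx : x ∈ U) (hy : y ≠ 0) (j : ι) :
    pdy j (fun a b => (F a b)^2) x y = Dhat F j (x, y) :=
  fderiv_slice_right (QJ_diffAt hF hx hy) _

lemma pdx_eq_fderivQJ {x y : ι → ℝ} (hx : x ∈ U) (hy : y ≠ 0) (l : ι) :
    pdx l (fun a b => (F a b)^2) x y = fderiv ℝ (QJ F) (x, y) (Pi.single l 1, 0) :=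
  fderiv_slice_left (QJ_diffAt hF hx hy) _

lemma pdy_slice_ev_y {x y : ι → ℝ} (hx : x ∈ U) (hy : y ≠ 0) (j : ι) :
    (fun y' => pdy j (fun a b => (F a b)^2) x y') =ᶠ[nhds y] (fun y' => Dhat F j (x, y')) :=
  eventually_of_mem (isOpen_ne.mem_nhds hy) (fun y' hy' => pdy_eq_Dhat hF hx hy' j)

lemma pdy_slice_ev_x {x y : ι → ℝ} (hx : x ∈ U) (hy : y ≠ 0) (j : ι) :
    (fun x' => pdy j (fun a b => (F a b)^2) x' y) =ᶠ[nhds x] (fun x' => Dhat F j (x', y)) :=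
  eventually_of_mem (hF.isOpen.mem_nhds hx) (fun x' hx' => pdy_eq_Dhat hF hx' hy j)

lemma fTensor_eq {x y : ι → ℝ} (hx : x ∈ U) (hy : y ≠ 0) (i j : ι) :
    fTensor F i j x y = (1/2) * fderiv ℝ (fun y' => Dhat F j (x, y')) y (Pi.single i 1) := by
  rw [fTensor, pdy, (pdy_slice_ev_y hF hx hy j).fderiv_eq]

lemma Dhat_slice_fderiv {x y : ι → ℝ} (hx : x ∈ U) (hy : y ≠ 0) (i j : ι) :
    fderiv ℝ (fun y' => Dhat F j (x, y')) y (Pi.single i 1) = 2 * fTensor F i j x y := by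
  rw [fTensor_eq hF hx hy]; ring

lemma pdx_pdy_eq {x y : ι → ℝ} (hx : x ∈ U) (hy : y ≠ 0) (μ j : ι) :
    pdx μ (pdy j (fun a b => (F a b)^2)) x y
      = fderiv ℝ (fun x' => Dhat F j (x', y)) x (Pi.single μ 1) := by
  rw [pdx, (pdy_slice_ev_x hF hx hy j).fderiv_eq]

lemma gMat_det_ne_zero {x y : ι → ℝ} (hx : x ∈ U) (hy : y ≠ 0) : (gMat F x y).det ≠ 0 := by
  intro h
  obtain ⟨w, hw0, hw⟩ := (Matrix.exists_mulVec_eq_zero_iff).2 h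
  have hpos := hF.posdef x hx y hy w hw0
  have hswap : ∑ i, ∑ j, fTensor F i j x y * w i * w j
      = ∑ i, w i * ((gMat F x y).mulVec w) i := by
    refine Finset.sum_congr rfl fun i _ => ?_
    simp only [Matrix.mulVec, dotProduct, Finset.mul_sum, gMat, Matrix.of_apply]
    exact Finset.sum_congr rfl fun j _ => by ring
  rw [hswap, hw] at hpos
  simp at hpos

/-- Euler's relation for the fiber derivative of `F²`. -/
lemma euler {x y : ι → ℝ} (hx : x ∈ U) (hy : y ≠ 0) (β : ι) :
    pdy β (fun a b => (F a b)^2) x y = 2 * ∑ γ, fTensor F β γ x y * y γ := by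
  classical
  -- step 1: radial derivative identity for all y' ≠ 0
  have key : ∀ y' : ι → ℝ, y' ≠ 0 →
      (∑ γ, y' γ * Dhat F γ (x, y')) = 2 * QJ F (x, y') := by
    intro y' hy'
    have hdiff : DifferentiableAt ℝ (fun b => QJ F (x, b)) y' :=
      diffAt_slice_right (QJ_diffAt hF hx hy')
    have hs : HasDerivAt (fun t : ℝ => t • y') y' 1 := by
      simpa using (hasDerivAt_id (1:ℝ)).smul_const y'
    have hd : HasDerivAt (fun t : ℝ => QJ F (x, t • y'))
        (fderiv ℝ (fun b => QJ F (x, b)) y' y') 1 := by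
      have h0 : HasFDerivAt (fun b => QJ F (x, b)) (fderiv ℝ (fun b => QJ F (x, b)) y')
          ((fun t : ℝ => t • y') 1) := by simpa using hdiff.hasFDerivAt
      exact h0.comp_hasDerivAt 1 hs
    have hev : (fun t : ℝ => QJ F (x, t • y')) =ᶠ[nhds 1] fun t => t^2 * QJ F (x, y') := by
      refine eventually_of_mem (isOpen_Ioi.mem_nhds (by norm_num : (0:ℝ) < 1)) ?_
      intro t ht
      have := hF.homog x hx y' t ht
      simp only [QJ]
      rw [this]; ring
    have hd2 : HasDerivAt (fun t : ℝ => t^2 * QJ F (x, y')) (2 * QJ F (x, y')) 1 := by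
      have := (hasDerivAt_pow 2 (1:ℝ)).mul_const (QJ F (x, y'))
      simpa using this
    have hd' : HasDerivAt (fun t : ℝ => QJ F (x, t • y')) (2 * QJ F (x, y')) 1 :=
      hd2.congr_of_eventuallyEq hev
    have huniq := hd.unique hd'
    have happ : fderiv ℝ (fun b => QJ F (x, b)) y' y'
        = ∑ γ, y' γ * Dhat F γ (x, y') := by
      rw [clm_apply_eq_sum]
      exact Finset.sum_congr rfl fun γ _ => by
        rw [fderiv_slice_right (QJ_diffAt hF hx hy') (Pi.single γ 1)]; rfl
    rw [← happ, huniq]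
  -- step 2: differentiate in direction β
  have hevAB : (fun y' => ∑ γ, y' γ * Dhat F γ (x, y'))
      =ᶠ[nhds y] (fun y' => 2 * QJ F (x, y')) :=
    eventually_of_mem (isOpen_ne.mem_nhds hy) (fun y' hy' => key y' hy')
  -- derivatives of both sides at y in direction β
  set L : ι → ((ι → ℝ) →L[ℝ] ℝ) := fun γ => fderiv ℝ (fun y' => Dhat F γ (x, y')) y with hL
  have hA : HasFDerivAt (fun y' : ι → ℝ => ∑ γ, y' γ * Dhat F γ (x, y'))
      (∑ γ, (y γ • L γ
        + Dhat F γ (x, y) • (ContinuousLinearMap.proj γ : ((ι → ℝ) →L[ℝ] ℝ)))) y := by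
    refine HasFDerivAt.fun_sum fun γ _ => ?_
    have h1 : HasFDerivAt (fun y' : ι → ℝ => y' γ)
        (ContinuousLinearMap.proj γ : ((ι → ℝ) →L[ℝ] ℝ)) y :=
      (ContinuousLinearMap.proj γ : ((ι → ℝ) →L[ℝ] ℝ)).hasFDerivAt
    have h2 : HasFDerivAt (fun y' : ι → ℝ => Dhat F γ (x, y')) (L γ) y :=
      (diffAt_slice_right (Dhat_diffAt hF hx hy γ)).hasFDerivAt
    exact h1.mul h2
  have hB : HasFDerivAt (fun y' : ι → ℝ => 2 * QJ F (x, y'))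
      ((2:ℝ) • fderiv ℝ (fun b => QJ F (x, b)) y) y :=
    (diffAt_slice_right (QJ_diffAt hF hx hy)).hasFDerivAt.const_mul 2
  have hA' : HasFDerivAt (fun y' : ι → ℝ => 2 * QJ F (x, y'))
      (∑ γ, (y γ • L γ
        + Dhat F γ (x, y) • (ContinuousLinearMap.proj γ : ((ι → ℝ) →L[ℝ] ℝ)))) y := hA.congr_of_eventuallyEq hevAB.symm
  have huniq := hA'.unique hB
  have happβ := congrArg (fun (M : (ι → ℝ) →L[ℝ] ℝ) => M (Pi.single β 1)) huniq
  simp only [ContinuousLinearMap.sum_apply, ContinuousLinearMap.add_apply,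
    ContinuousLinearMap.smul_apply, ContinuousLinearMap.proj_apply, smul_eq_mul] at happβ
  -- evaluate
  have hβ1 : ∑ γ, (y γ * (L γ) (Pi.single β 1) + Dhat F γ (x, y) * (Pi.single β (1:ℝ) : ι → ℝ) γ)
      = (∑ γ, y γ * (2 * fTensor F β γ x y)) + Dhat F β (x, y) := by
    rw [Finset.sum_add_distrib]
    congr 1
    · exact Finset.sum_congr rfl fun γ _ => by rw [hL, Dhat_slice_fderiv hF hx hy β γ]
    · rw [Finset.sum_eq_single β]
      · simp
      · intro γ _ hγ; simp [Pi.single_apply, hγ]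
      · intro h; exact absurd (Finset.mem_univ β) h
  have hβ2 : (2:ℝ) * fderiv ℝ (fun b => QJ F (x, b)) y (Pi.single β 1)
      = 2 * Dhat F β (x, y) := by
    rw [fderiv_slice_right (QJ_diffAt hF hx hy)]; rfl
  rw [hβ1, hβ2] at happβ
  have hfin : Dhat F β (x, y) = 2 * ∑ γ, fTensor F β γ x y * y γ := by
    have := happβ
    rw [Finset.mul_sum]
    rw [Finset.sum_congr rfl (fun γ _ => by ring : ∀ γ ∈ Finset.univ, (2:ℝ) * (fTensor F β γ x y * y γ) = y γ * (2 * fTensor F β γ x y))]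
    linarith
  rw [pdy_eq_Dhat hF hx hy β, hfin]

end Metric

noncomputable section Twisted

open ContinuousLinearMap Filter

variable {n₁ n₂ : ℕ}

def inlL (n₁ n₂ : ℕ) : ((Fin n₁ ⊕ Fin n₂) → ℝ) →L[ℝ] (Fin n₁ → ℝ) :=
  ContinuousLinearMap.pi fun i => ContinuousLinearMap.proj (Sum.inl i)

def inrL (n₁ n₂ : ℕ) : ((Fin n₁ ⊕ Fin n₂) → ℝ) →L[ℝ] (Fin n₂ → ℝ) :=
  ContinuousLinearMap.pi fun i => ContinuousLinearMap.proj (Sum.inr i)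

lemma inlL_single_inl (j : Fin n₁) :
    inlL n₁ n₂ (Pi.single (Sum.inl j) (1:ℝ)) = Pi.single j 1 := by
  funext i
  simp [inlL, ContinuousLinearMap.pi_apply, Pi.single_apply]

lemma inlL_single_inr (β : Fin n₂) :
    inlL n₁ n₂ (Pi.single (Sum.inr β) (1:ℝ)) = 0 := by
  funext i
  simp [inlL, ContinuousLinearMap.pi_apply, Pi.single_apply]

lemma inrL_single_inl (j : Fin n₁) :
    inrL n₁ n₂ (Pi.single (Sum.inl j) (1:ℝ)) = 0 := by
  funext i
  simp [inrL, ContinuousLinearMap.pi_apply, Pi.single_apply]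

lemma inrL_single_inr (β : Fin n₂) :
    inrL n₁ n₂ (Pi.single (Sum.inr β) (1:ℝ)) = Pi.single β 1 := by
  funext i
  simp [inrL, ContinuousLinearMap.pi_apply, Pi.single_apply]

variable {U₁ : Set (Fin n₁ → ℝ)} {U₂ : Set (Fin n₂ → ℝ)}
  {F₁ : (Fin n₁ → ℝ) → (Fin n₁ → ℝ) → ℝ} {F₂ : (Fin n₂ → ℝ) → (Fin n₂ → ℝ) → ℝ}
  {f : (Fin n₁ → ℝ) → (Fin n₂ → ℝ) → ℝ}

def Taux (F₁ : (Fin n₁ → ℝ) → (Fin n₁ → ℝ) → ℝ) (F₂ : (Fin n₂ → ℝ) → (Fin n₂ → ℝ) → ℝ)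
    (f : (Fin n₁ → ℝ) → (Fin n₂ → ℝ) → ℝ) :
    ((Fin n₁ ⊕ Fin n₂) → ℝ) → ((Fin n₁ ⊕ Fin n₂) → ℝ) → ℝ :=
  fun X Y => QJ F₁ (X ∘ Sum.inl, Y ∘ Sum.inl)
    + (f (X ∘ Sum.inl) (X ∘ Sum.inr))^2 * QJ F₂ (X ∘ Sum.inr, Y ∘ Sum.inr)

lemma twistedSq : (fun A B => (twisted F₁ F₂ f A B)^2) = Taux F₁ F₂ f := by
  funext A B
  simp only [twisted, Taux, QJ]
  rw [Real.sq_sqrt (by positivity)]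

lemma memNY {Y : (Fin n₁ ⊕ Fin n₂) → ℝ} (hY1 : Y ∘ Sum.inl ≠ 0) (hY2 : Y ∘ Sum.inr ≠ 0) :
    {Y' : (Fin n₁ ⊕ Fin n₂) → ℝ | Y' ∘ Sum.inl ≠ 0 ∧ Y' ∘ Sum.inr ≠ 0} ∈ nhds Y := by
  have hcl : Continuous fun Y' : (Fin n₁ ⊕ Fin n₂) → ℝ => Y' ∘ Sum.inl :=
    continuous_pi fun i => continuous_apply _
  have hcr : Continuous fun Y' : (Fin n₁ ⊕ Fin n₂) → ℝ => Y' ∘ Sum.inr :=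
    continuous_pi fun i => continuous_apply _
  have hop : IsOpen {Y' : (Fin n₁ ⊕ Fin n₂) → ℝ | Y' ∘ Sum.inl ≠ 0 ∧ Y' ∘ Sum.inr ≠ 0} :=
    IsOpen.inter (isOpen_ne.preimage hcl) (isOpen_ne.preimage hcr)
  exact hop.mem_nhds ⟨hY1, hY2⟩

lemma memNX (hF₁ : IsFinslerMetric U₁ F₁) (hF₂ : IsFinslerMetric U₂ F₂)
    {X : (Fin n₁ ⊕ Fin n₂) → ℝ} (hX1 : X ∘ Sum.inl ∈ U₁) (hX2 : X ∘ Sum.inr ∈ U₂) :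
    {X' : (Fin n₁ ⊕ Fin n₂) → ℝ | X' ∘ Sum.inl ∈ U₁ ∧ X' ∘ Sum.inr ∈ U₂} ∈ nhds X := by
  have hcl : Continuous fun Y' : (Fin n₁ ⊕ Fin n₂) → ℝ => Y' ∘ Sum.inl :=
    continuous_pi fun i => continuous_apply _
  have hcr : Continuous fun Y' : (Fin n₁ ⊕ Fin n₂) → ℝ => Y' ∘ Sum.inr :=
    continuous_pi fun i => continuous_apply _
  have hop : IsOpen {X' : (Fin n₁ ⊕ Fin n₂) → ℝ | X' ∘ Sum.inl ∈ U₁ ∧ X' ∘ Sum.inr ∈ U₂} :=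
    IsOpen.inter (hF₁.isOpen.preimage hcl) (hF₂.isOpen.preimage hcr)
  exact hop.mem_nhds ⟨hX1, hX2⟩

lemma pdyT (hF₁ : IsFinslerMetric U₁ F₁) (hF₂ : IsFinslerMetric U₂ F₂)
    {X Y : (Fin n₁ ⊕ Fin n₂) → ℝ} (hX1 : X ∘ Sum.inl ∈ U₁) (hX2 : X ∘ Sum.inr ∈ U₂)
    (hY1 : Y ∘ Sum.inl ≠ 0) (hY2 : Y ∘ Sum.inr ≠ 0) :
    (∀ j : Fin n₁, pdy (Sum.inl j) (Taux F₁ F₂ f) X Y = Dhat F₁ j (X ∘ Sum.inl, Y ∘ Sum.inl)) ∧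
    (∀ β : Fin n₂, pdy (Sum.inr β) (Taux F₁ F₂ f) X Y
      = (f (X ∘ Sum.inl) (X ∘ Sum.inr))^2 * Dhat F₂ β (X ∘ Sum.inr, Y ∘ Sum.inr)) := by
  have d₁ : DifferentiableAt ℝ (fun b => QJ F₁ (X ∘ Sum.inl, b)) (Y ∘ Sum.inl) :=
    diffAt_slice_right (QJ_diffAt hF₁ hX1 hY1)
  have d₂ : DifferentiableAt ℝ (fun b => QJ F₂ (X ∘ Sum.inr, b)) (Y ∘ Sum.inr) :=
    diffAt_slice_right (QJ_diffAt hF₂ hX2 hY2)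
  have h1 : HasFDerivAt (fun Y' : (Fin n₁ ⊕ Fin n₂) → ℝ => QJ F₁ (X ∘ Sum.inl, Y' ∘ Sum.inl))
      ((fderiv ℝ (fun b => QJ F₁ (X ∘ Sum.inl, b)) (Y ∘ Sum.inl)).comp (inlL n₁ n₂)) Y :=
    by have := d₁.hasFDerivAt.comp Y (inlL n₁ n₂).hasFDerivAt; exact this
  have h2 : HasFDerivAt (fun Y' : (Fin n₁ ⊕ Fin n₂) → ℝ => QJ F₂ (X ∘ Sum.inr, Y' ∘ Sum.inr))
      ((fderiv ℝ (fun b => QJ F₂ (X ∘ Sum.inr, b)) (Y ∘ Sum.inr)).comp (inrL n₁ n₂)) Y :=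
    by have := d₂.hasFDerivAt.comp Y (inrL n₁ n₂).hasFDerivAt; exact this
  have h3 : HasFDerivAt (fun Y' => Taux F₁ F₂ f X Y')
      (((fderiv ℝ (fun b => QJ F₁ (X ∘ Sum.inl, b)) (Y ∘ Sum.inl)).comp (inlL n₁ n₂))
        + (f (X ∘ Sum.inl) (X ∘ Sum.inr))^2 •
          ((fderiv ℝ (fun b => QJ F₂ (X ∘ Sum.inr, b)) (Y ∘ Sum.inr)).comp (inrL n₁ n₂))) Y :=
    h1.add (h2.const_mul _)
  constructor
  · intro j
    rw [pdy, h3.fderiv]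
    simp only [ContinuousLinearMap.add_apply, ContinuousLinearMap.comp_apply,
      ContinuousLinearMap.smul_apply, smul_eq_mul]
    rw [inlL_single_inl, inrL_single_inl, map_zero, mul_zero, add_zero]
    rw [fderiv_slice_right (QJ_diffAt hF₁ hX1 hY1)]
    rfl
  · intro β
    rw [pdy, h3.fderiv]
    simp only [ContinuousLinearMap.add_apply, ContinuousLinearMap.comp_apply,
      ContinuousLinearMap.smul_apply, smul_eq_mul]
    rw [inlL_single_inr, inrL_single_inr, map_zero, zero_add]
    rw [fderiv_slice_right (QJ_diffAt hF₂ hX2 hY2)]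
    rfl

lemma gMat_twisted (hF₁ : IsFinslerMetric U₁ F₁) (hF₂ : IsFinslerMetric U₂ F₂)
    {x y : Fin n₁ → ℝ} {u v : Fin n₂ → ℝ}
    (hx : x ∈ U₁) (hu : u ∈ U₂) (hy : y ≠ 0) (hv : v ≠ 0) :
    gMat (twisted F₁ F₂ f) (Sum.elim x u) (Sum.elim y v)
      = Matrix.fromBlocks (gMat F₁ x y) 0 0 ((f x u)^2 • gMat F₂ u v) := by
  have hX1 : Sum.elim x u ∘ Sum.inl ∈ U₁ := by rwa [Sum.elim_comp_inl]
  have hX2 : Sum.elim x u ∘ Sum.inr ∈ U₂ := by rwa [Sum.elim_comp_inr]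
  have hY1 : Sum.elim y v ∘ Sum.inl ≠ 0 := by rwa [Sum.elim_comp_inl]
  have hY2 : Sum.elim y v ∘ Sum.inr ≠ 0 := by rwa [Sum.elim_comp_inr]
  have hevl : ∀ j : Fin n₁, (fun Y' => pdy (Sum.inl j) (Taux F₁ F₂ f) (Sum.elim x u) Y')
      =ᶠ[nhds (Sum.elim y v)] (fun Y' => Dhat F₁ j (x, Y' ∘ Sum.inl)) := by
    intro j
    filter_upwards [memNY hY1 hY2] with Y' hY'
    have h := (pdyT (f := f) hF₁ hF₂ hX1 hX2 hY'.1 hY'.2).1 j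
    rw [h, Sum.elim_comp_inl]
  have hevr : ∀ β : Fin n₂, (fun Y' => pdy (Sum.inr β) (Taux F₁ F₂ f) (Sum.elim x u) Y')
      =ᶠ[nhds (Sum.elim y v)] (fun Y' => (f x u)^2 * Dhat F₂ β (u, Y' ∘ Sum.inr)) := by
    intro β
    filter_upwards [memNY hY1 hY2] with Y' hY'
    have h := (pdyT (f := f) hF₁ hF₂ hX1 hX2 hY'.1 hY'.2).2 β
    rw [h, Sum.elim_comp_inl, Sum.elim_comp_inr]
  have hcompl : ∀ j : Fin n₁,
      HasFDerivAt (fun Y' : (Fin n₁ ⊕ Fin n₂) → ℝ => Dhat F₁ j (x, Y' ∘ Sum.inl))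
        ((fderiv ℝ (fun y' => Dhat F₁ j (x, y')) y).comp (inlL n₁ n₂)) (Sum.elim y v) :=
    fun j => by have := (diffAt_slice_right (Dhat_diffAt hF₁ hx hy j)).hasFDerivAt.comp (Sum.elim y v)
                  (inlL n₁ n₂).hasFDerivAt; exact this
  have hcompr : ∀ β : Fin n₂,
      HasFDerivAt (fun Y' : (Fin n₁ ⊕ Fin n₂) → ℝ => (f x u)^2 * Dhat F₂ β (u, Y' ∘ Sum.inr))
        ((f x u)^2 • ((fderiv ℝ (fun v' => Dhat F₂ β (u, v')) v).comp (inrL n₁ n₂)))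
        (Sum.elim y v) :=
    fun β => by
      have := (diffAt_slice_right (Dhat_diffAt hF₂ hu hv β)).hasFDerivAt.comp (Sum.elim y v)
        (inrL n₁ n₂).hasFDerivAt
      exact this.const_mul _
  ext a b
  rcases a with i | a <;> rcases b with j | b
  · simp only [gMat, Matrix.of_apply, Matrix.fromBlocks_apply₁₁]
    rw [fTensor, fTensor, twistedSq, pdy, (hevl j).fderiv_eq, (hcompl j).fderiv]
    simp only [ContinuousLinearMap.comp_apply]
    rw [inlL_single_inl, Dhat_slice_fderiv hF₁ hx hy i j, fTensor]
    ring
  · simp only [gMat, Matrix.of_apply, Matrix.fromBlocks_apply₁₂, Matrix.zero_apply]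
    rw [fTensor, twistedSq, pdy, (hevr b).fderiv_eq, (hcompr b).fderiv]
    simp only [ContinuousLinearMap.smul_apply, ContinuousLinearMap.comp_apply, smul_eq_mul]
    rw [inrL_single_inl, map_zero]
    simp
  · simp only [gMat, Matrix.of_apply, Matrix.fromBlocks_apply₂₁, Matrix.zero_apply]
    rw [fTensor, twistedSq, pdy, (hevl j).fderiv_eq, (hcompl j).fderiv]
    simp only [ContinuousLinearMap.comp_apply]
    rw [inlL_single_inr, map_zero]
    simp
  · simp only [gMat, Matrix.of_apply, Matrix.fromBlocks_apply₂₂, Matrix.smul_apply,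
      smul_eq_mul]
    rw [fTensor, twistedSq, pdy, (hevr b).fderiv_eq, (hcompr b).fderiv]
    simp only [ContinuousLinearMap.smul_apply, ContinuousLinearMap.comp_apply, smul_eq_mul]
    rw [inrL_single_inr, Dhat_slice_fderiv hF₂ hu hv a b, fTensor]
    ring

section PdxLemmas

variable (hF₁ : IsFinslerMetric U₁ F₁) (hF₂ : IsFinslerMetric U₂ F₂)
  (hf : ContDiffOn ℝ (⊤ : ℕ∞) (fun p : (Fin n₁ → ℝ) × (Fin n₂ → ℝ) => f p.1 p.2) (U₁ ×ˢ U₂))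
  {x y : Fin n₁ → ℝ} {u v : Fin n₂ → ℝ}
  (hx : x ∈ U₁) (hu : u ∈ U₂) (hy : y ≠ 0) (hv : v ≠ 0)

include hF₁ hF₂ hf hx hu hy hv

lemma fJ_diffAt : DifferentiableAt ℝ (fun p : (Fin n₁ → ℝ) × (Fin n₂ → ℝ) => f p.1 p.2) (x, u) := by
  have h : ContDiffAt ℝ (⊤ : ℕ∞) (fun p : (Fin n₁ → ℝ) × (Fin n₂ → ℝ) => f p.1 p.2) (x, u) :=
    (hf.of_le (by simp)).contDiffAt ((hF₁.isOpen.prod hF₂.isOpen).mem_nhds (Set.mk_mem_prod hx hu))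
  exact h.differentiableAt (by simp)

lemma hasFDerivAt_fsq :
    HasFDerivAt (fun X : (Fin n₁ ⊕ Fin n₂) → ℝ => (f (X ∘ Sum.inl) (X ∘ Sum.inr))^2)
      (f x u • ((fderiv ℝ (fun p : (Fin n₁ → ℝ) × (Fin n₂ → ℝ) => f p.1 p.2) (x, u)).comp
          ((inlL n₁ n₂).prod (inrL n₁ n₂)))
        + f x u • ((fderiv ℝ (fun p : (Fin n₁ → ℝ) × (Fin n₂ → ℝ) => f p.1 p.2) (x, u)).comp
          ((inlL n₁ n₂).prod (inrL n₁ n₂)))) (Sum.elim x u) := by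
  have hgf : HasFDerivAt (fun X : (Fin n₁ ⊕ Fin n₂) → ℝ => f (X ∘ Sum.inl) (X ∘ Sum.inr))
      ((fderiv ℝ (fun p : (Fin n₁ → ℝ) × (Fin n₂ → ℝ) => f p.1 p.2) (x, u)).comp
        ((inlL n₁ n₂).prod (inrL n₁ n₂))) (Sum.elim x u) :=
    by
      have hP : HasFDerivAt (fun X : (Fin n₁ ⊕ Fin n₂) → ℝ => (X ∘ Sum.inl, X ∘ Sum.inr))
          ((inlL n₁ n₂).prod (inrL n₁ n₂)) (Sum.elim x u) :=
        ((inlL n₁ n₂).prod (inrL n₁ n₂)).hasFDerivAt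
      exact (fJ_diffAt hF₁ hF₂ hf hx hu hy hv).hasFDerivAt.comp (Sum.elim x u) hP
  have h := hgf.mul hgf
  have heq : (fun X : (Fin n₁ ⊕ Fin n₂) → ℝ => (f (X ∘ Sum.inl) (X ∘ Sum.inr))^2)
      = fun X => f (X ∘ Sum.inl) (X ∘ Sum.inr) * f (X ∘ Sum.inl) (X ∘ Sum.inr) := by
    funext X; ring
  rw [heq]
  exact h

lemma pdx_pdyT (β : Fin n₂) :
    (∀ k : Fin n₁, pdx (Sum.inl k) (pdy (Sum.inr β) (Taux F₁ F₂ f)) (Sum.elim x u) (Sum.elim y v)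
        = 2 * f x u * pdx k f x u * pdy β (fun a b => (F₂ a b)^2) u v) ∧
    (∀ μ : Fin n₂, pdx (Sum.inr μ) (pdy (Sum.inr β) (Taux F₁ F₂ f)) (Sum.elim x u) (Sum.elim y v)
        = 2 * f x u * pdy μ f x u * pdy β (fun a b => (F₂ a b)^2) u v
          + (f x u)^2 * pdx μ (pdy β (fun a b => (F₂ a b)^2)) u v) := by
  have hY1 : Sum.elim y v ∘ Sum.inl ≠ 0 := by rwa [Sum.elim_comp_inl]
  have hY2 : Sum.elim y v ∘ Sum.inr ≠ 0 := by rwa [Sum.elim_comp_inr]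
  have hfd := fJ_diffAt hF₁ hF₂ hf hx hu hy hv
  have hsq := hasFDerivAt_fsq hF₁ hF₂ hf hx hu hy hv
  have hDh : HasFDerivAt (fun X : (Fin n₁ ⊕ Fin n₂) → ℝ => Dhat F₂ β (X ∘ Sum.inr, v))
      ((fderiv ℝ (fun u' => Dhat F₂ β (u', v)) u).comp (inrL n₁ n₂)) (Sum.elim x u) :=
    by have := (diffAt_slice_left (Dhat_diffAt hF₂ hu hv β)).hasFDerivAt.comp (Sum.elim x u) (inrL n₁ n₂).hasFDerivAt; exact this
  have hprod : HasFDerivAt (fun X : (Fin n₁ ⊕ Fin n₂) → ℝ =>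
      (f (X ∘ Sum.inl) (X ∘ Sum.inr))^2 * Dhat F₂ β (X ∘ Sum.inr, v)) _ (Sum.elim x u) :=
    hsq.mul hDh
  have hev : (fun X => pdy (Sum.inr β) (Taux F₁ F₂ f) X (Sum.elim y v))
      =ᶠ[nhds (Sum.elim x u)]
      (fun X => (f (X ∘ Sum.inl) (X ∘ Sum.inr))^2 * Dhat F₂ β (X ∘ Sum.inr, v)) := by
    filter_upwards [memNX hF₁ hF₂ (by rwa [Sum.elim_comp_inl]) (by rwa [Sum.elim_comp_inr])]
      with X hX
    have h := (pdyT (f := f) hF₁ hF₂ hX.1 hX.2 hY1 hY2).2 β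
    rw [h, Sum.elim_comp_inr]
  -- the value of Dhat at the base point
  have hDval : Dhat F₂ β (u, v) = pdy β (fun a b => (F₂ a b)^2) u v :=
    (pdy_eq_Dhat hF₂ hu hv β).symm
  have hpdxf : ∀ k : Fin n₁, pdx k f x u
      = fderiv ℝ (fun p : (Fin n₁ → ℝ) × (Fin n₂ → ℝ) => f p.1 p.2) (x, u) (Pi.single k 1, 0) :=
    fun k => fderiv_slice_left hfd _
  have hpdyf : ∀ μ : Fin n₂, pdy μ f x u
      = fderiv ℝ (fun p : (Fin n₁ → ℝ) × (Fin n₂ → ℝ) => f p.1 p.2) (x, u) (0, Pi.single μ 1) :=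
    fun μ => fderiv_slice_right hfd _
  have hpdxD : ∀ μ : Fin n₂, pdx μ (pdy β (fun a b => (F₂ a b)^2)) u v
      = fderiv ℝ (fun u' => Dhat F₂ β (u', v)) u (Pi.single μ 1) :=
    fun μ => pdx_pdy_eq hF₂ hu hv μ β
  constructor
  · intro k
    rw [pdx, hev.fderiv_eq, hprod.fderiv]
    simp only [ContinuousLinearMap.add_apply, ContinuousLinearMap.smul_apply,
      ContinuousLinearMap.comp_apply, ContinuousLinearMap.prod_apply, smul_eq_mul,
      Sum.elim_comp_inl, Sum.elim_comp_inr]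
    rw [inlL_single_inl, inrL_single_inl, map_zero, mul_zero]
    rw [hpdxf k, hDval]
    ring
  · intro μ
    rw [pdx, hev.fderiv_eq, hprod.fderiv]
    simp only [ContinuousLinearMap.add_apply, ContinuousLinearMap.smul_apply,
      ContinuousLinearMap.comp_apply, ContinuousLinearMap.prod_apply, smul_eq_mul,
      Sum.elim_comp_inl, Sum.elim_comp_inr]
    rw [inlL_single_inr, inrL_single_inr]
    rw [hpdyf μ, hpdxD μ, hDval]
    ring

lemma pdxT (β : Fin n₂) :
    pdx (Sum.inr β) (Taux F₁ F₂ f) (Sum.elim x u) (Sum.elim y v)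
      = 2 * f x u * pdy β f x u * (F₂ u v)^2
        + (f x u)^2 * pdx β (fun a b => (F₂ a b)^2) u v := by
  have hfd := fJ_diffAt hF₁ hF₂ hf hx hu hy hv
  have hsq := hasFDerivAt_fsq hF₁ hF₂ hf hx hu hy hv
  have h1 : HasFDerivAt (fun X : (Fin n₁ ⊕ Fin n₂) → ℝ => QJ F₁ (X ∘ Sum.inl, y))
      ((fderiv ℝ (fun x' => QJ F₁ (x', y)) x).comp (inlL n₁ n₂)) (Sum.elim x u) :=
    by have := (diffAt_slice_left (QJ_diffAt hF₁ hx hy)).hasFDerivAt.comp (Sum.elim x u) (inlL n₁ n₂).hasFDerivAt; exact this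
  have h3 : HasFDerivAt (fun X : (Fin n₁ ⊕ Fin n₂) → ℝ => QJ F₂ (X ∘ Sum.inr, v))
      ((fderiv ℝ (fun u' => QJ F₂ (u', v)) u).comp (inrL n₁ n₂)) (Sum.elim x u) :=
    by have := (diffAt_slice_left (QJ_diffAt hF₂ hu hv)).hasFDerivAt.comp (Sum.elim x u) (inrL n₁ n₂).hasFDerivAt; exact this
  have htot : HasFDerivAt (fun X => Taux F₁ F₂ f X (Sum.elim y v))
      (((fderiv ℝ (fun x' => QJ F₁ (x', y)) x).comp (inlL n₁ n₂))
        + (((f x u)^2 •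
            ((fderiv ℝ (fun u' => QJ F₂ (u', v)) u).comp (inrL n₁ n₂)))
          + QJ F₂ (u, v) •
            (f x u • ((fderiv ℝ (fun p : (Fin n₁ → ℝ) × (Fin n₂ → ℝ) => f p.1 p.2) (x, u)).comp
                ((inlL n₁ n₂).prod (inrL n₁ n₂)))
              + f x u • ((fderiv ℝ (fun p : (Fin n₁ → ℝ) × (Fin n₂ → ℝ) => f p.1 p.2) (x, u)).comp
                ((inlL n₁ n₂).prod (inrL n₁ n₂)))))) (Sum.elim x u) :=
    h1.add (hsq.mul h3)
  rw [pdx, htot.fderiv]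
  simp only [ContinuousLinearMap.add_apply, ContinuousLinearMap.smul_apply,
    ContinuousLinearMap.comp_apply, ContinuousLinearMap.prod_apply, smul_eq_mul,
    Sum.elim_comp_inl, Sum.elim_comp_inr]
  rw [inlL_single_inr, inrL_single_inr, map_zero, zero_add]
  rw [show fderiv ℝ (fun p : (Fin n₁ → ℝ) × (Fin n₂ → ℝ) => f p.1 p.2) (x, u)
      ((0 : Fin n₁ → ℝ), Pi.single β 1)
    = pdy β f x u from (fderiv_slice_right hfd _).symm]
  rw [show fderiv ℝ (fun u' => QJ F₂ (u', v)) u (Pi.single β 1)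
    = pdx β (fun a b => (F₂ a b)^2) u v from rfl]
  rw [show QJ F₂ (u, v) = (F₂ u v)^2 from rfl]
  ring

end PdxLemmas

end Twisted


theorem stmt_1 {n₁ n₂ : ℕ} {U₁ : Set (Fin n₁ → ℝ)} {U₂ : Set (Fin n₂ → ℝ)}
    {F₁ : (Fin n₁ → ℝ) → (Fin n₁ → ℝ) → ℝ}
    {F₂ : (Fin n₂ → ℝ) → (Fin n₂ → ℝ) → ℝ}
    {f : (Fin n₁ → ℝ) → (Fin n₂ → ℝ) → ℝ}
    (hF₁ : IsFinslerMetric U₁ F₁) (hF₂ : IsFinslerMetric U₂ F₂)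
    (hf : ContDiffOn ℝ (⊤ : ℕ∞) (fun p : (Fin n₁ → ℝ) × (Fin n₂ → ℝ) => f p.1 p.2) (U₁ ×ˢ U₂))
    (hfpos : ∀ x ∈ U₁, ∀ u ∈ U₂, 0 < f x u)
 :
    ∀ x ∈ U₁, ∀ u ∈ U₂, ∀ (y : Fin n₁ → ℝ) (v : Fin n₂ → ℝ), y ≠ 0 → v ≠ 0 →
      ∀ α : Fin n₂,
        sprayCoef (twisted F₁ F₂ f) (Sum.inr α) (Sum.elim x u) (Sum.elim y v)
          = sprayCoef F₂ α u v
            + (f x u)⁻¹ * ((∑ j, pdx j f x u * y j) * v α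
              + (∑ μ, pdy μ f x u * v μ) * v α
              - (1/2) * (∑ γ, pdy γ f x u * gInv F₂ u v α γ) * (F₂ u v)^2) := by
  intro x hx u hu y v hy hv α
  have hc : 0 < f x u := hfpos x hx u hu
  have hcne : f x u ≠ 0 := ne_of_gt hc
  have hdet₁ : (gMat F₁ x y).det ≠ 0 := gMat_det_ne_zero hF₁ hx hy
  have hdet₂ : (gMat F₂ u v).det ≠ 0 := gMat_det_ne_zero hF₂ hu hv
  have hc2 : (f x u)^2 ≠ 0 := pow_ne_zero 2 hcne
  have hdu₁ : IsUnit (gMat F₁ x y).det := isUnit_iff_ne_zero.mpr hdet₁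
  have hdu₂ : IsUnit (gMat F₂ u v).det := isUnit_iff_ne_zero.mpr hdet₂
  have hGinv : gInv (twisted F₁ F₂ f) (Sum.elim x u) (Sum.elim y v)
      = Matrix.fromBlocks (gMat F₁ x y)⁻¹ 0 0 (((f x u)^2)⁻¹ • (gMat F₂ u v)⁻¹) := by
    rw [gInv, gMat_twisted hF₁ hF₂ hx hu hy hv]
    apply Matrix.inv_eq_right_inv
    rw [Matrix.fromBlocks_multiply]
    simp only [Matrix.mul_zero, Matrix.zero_mul, add_zero, zero_add,
      Matrix.mul_nonsing_inv _ hdu₁]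
    rw [Matrix.mul_smul, Matrix.smul_mul, smul_smul, Matrix.mul_nonsing_inv _ hdu₂,
      inv_mul_cancel₀ hc2, one_smul, Matrix.fromBlocks_one]
  have hppl : ∀ (β : Fin n₂) (k : Fin n₁),
      pdx (Sum.inl k) (pdy (Sum.inr β) (Taux F₁ F₂ f)) (Sum.elim x u) (Sum.elim y v)
        = 2 * f x u * pdx k f x u * pdy β (fun a b => (F₂ a b)^2) u v :=
    fun β => (pdx_pdyT hF₁ hF₂ hf hx hu hy hv β).1
  have hppr : ∀ (β μ : Fin n₂),
      pdx (Sum.inr μ) (pdy (Sum.inr β) (Taux F₁ F₂ f)) (Sum.elim x u) (Sum.elim y v)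
        = 2 * f x u * pdy μ f x u * pdy β (fun a b => (F₂ a b)^2) u v
          + (f x u)^2 * pdx μ (pdy β (fun a b => (F₂ a b)^2)) u v :=
    fun β => (pdx_pdyT hF₁ hF₂ hf hx hu hy hv β).2
  have hpT : ∀ β : Fin n₂,
      pdx (Sum.inr β) (Taux F₁ F₂ f) (Sum.elim x u) (Sum.elim y v)
        = 2 * f x u * pdy β f x u * (F₂ u v)^2
          + (f x u)^2 * pdx β (fun a b => (F₂ a b)^2) u v :=
    fun β => pdxT hF₁ hF₂ hf hx hu hy hv β
  rw [sprayCoef, twistedSq (F₁ := F₁) (F₂ := F₂) (f := f), hGinv]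
  simp only [Fintype.sum_sum_type, Matrix.fromBlocks_apply₂₁, Matrix.fromBlocks_apply₂₂,
    Matrix.zero_apply, zero_mul, Finset.sum_const_zero, zero_add, Matrix.smul_apply,
    smul_eq_mul, Sum.elim_inl, Sum.elim_inr]
  simp only [hppl, hppr, hpT]
  -- Euler-based contraction
  have hS1 : ∑ β, (gMat F₂ u v)⁻¹ α β * pdy β (fun a b => (F₂ a b)^2) u v = 2 * v α := by
    have h1 : ∀ β, pdy β (fun a b => (F₂ a b)^2) u v = 2 * ∑ γ, fTensor F₂ β γ u v * v γ :=
      fun β => euler hF₂ hu hv β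
    calc ∑ β, (gMat F₂ u v)⁻¹ α β * pdy β (fun a b => (F₂ a b)^2) u v
        = ∑ β, ∑ γ, 2 * v γ * ((gMat F₂ u v)⁻¹ α β * gMat F₂ u v β γ) := by
          refine Finset.sum_congr rfl fun β _ => ?_
          rw [h1 β, Finset.mul_sum, Finset.mul_sum]
          refine Finset.sum_congr rfl fun γ _ => ?_
          simp only [gMat, Matrix.of_apply]
          ring
      _ = ∑ γ, 2 * v γ * (((gMat F₂ u v)⁻¹ * gMat F₂ u v) α γ) := by
          rw [Finset.sum_comm]
          refine Finset.sum_congr rfl fun γ _ => ?_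
          rw [Matrix.mul_apply, Finset.mul_sum]
      _ = 2 * v α := by
          rw [Matrix.nonsing_inv_mul _ hdu₂]
          rw [Finset.sum_eq_single α]
          · simp
          · intro γ _ hγ
            simp [Matrix.one_apply, Ne.symm hγ]
          · intro h; exact absurd (Finset.mem_univ α) h
  -- per-β reorganization
  have key : ∀ β : Fin n₂,
      (f x u ^ 2)⁻¹ * (gMat F₂ u v)⁻¹ α β *
        (∑ j : Fin n₁, y j * (2 * f x u * pdx j f x u * pdy β (fun a b => F₂ a b ^ 2) u v) +
            ∑ μ : Fin n₂,
              v μ *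
                (2 * f x u * pdy μ f x u * pdy β (fun a b => F₂ a b ^ 2) u v +
                  f x u ^ 2 * pdx μ (pdy β fun a b => F₂ a b ^ 2) u v) -
          (2 * f x u * pdy β f x u * F₂ u v ^ 2 + f x u ^ 2 * pdx β (fun a b => F₂ a b ^ 2) u v))
      = (gMat F₂ u v)⁻¹ α β *
          ((∑ μ, v μ * pdx μ (pdy β fun a b => F₂ a b ^ 2) u v)
            - pdx β (fun a b => F₂ a b ^ 2) u v)
        + (2 * (f x u)⁻¹ * ((∑ j, pdx j f x u * y j) + ∑ μ, pdy μ f x u * v μ))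
            * ((gMat F₂ u v)⁻¹ α β * pdy β (fun a b => F₂ a b ^ 2) u v)
        - (2 * (f x u)⁻¹ * (F₂ u v)^2) * ((gMat F₂ u v)⁻¹ α β * pdy β f x u) := by
    intro β
    have e1 : ∑ j : Fin n₁, y j * (2 * f x u * pdx j f x u * pdy β (fun a b => F₂ a b ^ 2) u v)
        = 2 * f x u * pdy β (fun a b => F₂ a b ^ 2) u v * ∑ j, pdx j f x u * y j := by
      rw [Finset.mul_sum]; exact Finset.sum_congr rfl fun j _ => by ring
    have e2 : ∑ μ : Fin n₂,
          v μ * (2 * f x u * pdy μ f x u * pdy β (fun a b => F₂ a b ^ 2) u v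
            + f x u ^ 2 * pdx μ (pdy β fun a b => F₂ a b ^ 2) u v)
        = 2 * f x u * pdy β (fun a b => F₂ a b ^ 2) u v * (∑ μ, pdy μ f x u * v μ)
          + f x u ^ 2 * ∑ μ, v μ * pdx μ (pdy β fun a b => F₂ a b ^ 2) u v := by
      simp only [mul_add]
      rw [Finset.sum_add_distrib]
      congr 1
      · rw [Finset.mul_sum]; exact Finset.sum_congr rfl fun μ _ => by ring
      · rw [Finset.mul_sum]; exact Finset.sum_congr rfl fun μ _ => by ring
    rw [e1, e2]
    field_simp
    ring
  rw [Finset.sum_congr rfl fun β _ => key β]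
  rw [Finset.sum_sub_distrib, Finset.sum_add_distrib, ← Finset.mul_sum, ← Finset.mul_sum,
    hS1]
  rw [sprayCoef]
  simp only [gInv]
  have hcomm : ∑ γ, pdy γ f x u * (gMat F₂ u v)⁻¹ α γ
      = ∑ γ, (gMat F₂ u v)⁻¹ α γ * pdy γ f x u :=
    Finset.sum_congr rfl fun γ _ => mul_comm _ _
  rw [hcomm]
  ring
end

section
/- For a twisted product Finsler metric F on U₁ × U₂ with n := n₁ + n₂, the Matsumoto torsion M̃_{abc} satisfies the contraction identities y^j y^k M̃_{αjk} = −( f² F₁² F₂² / ((n+1) F²) ) I_α and v^β v^λ M̃_{iβλ} = −( f² F₁² F₂² / ((n+1) F²) ) I_i, where I_i is the mean Cartan torsion of F₁ and I_α is the mean Cartan torsion of F₂. -/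
open scoped BigOperators

namespace Stmt7Aux

open Filter
open scoped ContDiff

noncomputable section

section general

variable {E W : Type*} [NormedAddCommGroup E] [NormedSpace ℝ E]
  [NormedAddCommGroup W] [NormedSpace ℝ W]

lemma euler_ray {G : E → W} {y : E} {G' : E →L[ℝ] W} (hG : HasFDerivAt G G' y)
    (k : ℕ) (hh : ∀ t : ℝ, 0 < t → G (t • y) = t ^ k • G y) :
    G' y = (k : ℝ) • G y := by
  have hs : HasDerivAt (fun t : ℝ => t • y) y 1 := by
    simpa using (hasDerivAt_id (1 : ℝ)).smul_const y
  have hGy : HasFDerivAt G G' ((1 : ℝ) • y) := by rwa [one_smul]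
  have h1 : HasDerivAt (fun t : ℝ => G (t • y)) (G' y) 1 := by
    simpa [Function.comp_def] using hGy.comp_hasDerivAt 1 hs
  have h2 : HasDerivAt (fun t : ℝ => t ^ k • G y) ((k : ℝ) • G y) 1 := by
    simpa using (hasDerivAt_pow k (1:ℝ)).smul_const (G y)
  have heq : (fun t : ℝ => t ^ k • G y) =ᶠ[nhds 1] fun t : ℝ => G (t • y) := by
    filter_upwards [Ioi_mem_nhds (zero_lt_one)] with t ht
    exact (hh t ht).symm
  exact (h1.congr_of_eventuallyEq heq).unique h2

lemma fderiv_comp_const_smul {G : E → W} {y : E} (t : ℝ)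
    (hG : DifferentiableAt ℝ G (t • y)) :
    fderiv ℝ (fun y' => G (t • y')) y = t • fderiv ℝ G (t • y) := by
  have hL : HasFDerivAt (fun y' : E => t • y') (t • (ContinuousLinearMap.id ℝ E)) y := by
    exact (hasFDerivAt_id y).const_smul t
  have h : HasFDerivAt (fun y' => G (t • y'))
      ((fderiv ℝ G (t • y)).comp (t • (ContinuousLinearMap.id ℝ E))) y :=
    hG.hasFDerivAt.comp y hL
  rw [h.fderiv]
  ext w
  simp

end general

section coord

variable {ι : Type*} [Fintype ι] [DecidableEq ι]

lemma sum_smul_single (y : ι → ℝ) : ∑ i, y i • (Pi.single i (1 : ℝ) : ι → ℝ) = y := by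
  have h : ∀ i : ι, y i • (Pi.single i (1 : ℝ) : ι → ℝ) = Pi.single i (y i) := by
    intro i; rw [← Pi.single_smul, smul_eq_mul, mul_one]
  simp_rw [h]
  exact Finset.univ_sum_single y

lemma clm_sum_single {W : Type*} [NormedAddCommGroup W] [NormedSpace ℝ W]
    (L : (ι → ℝ) →L[ℝ] W) (y : ι → ℝ) :
    ∑ i, y i • L (Pi.single i 1) = L y := by
  simp_rw [← map_smul, ← map_sum, sum_smul_single]

/-- The squared metric at a fixed base point. -/
def Phi (F : (ι → ℝ) → (ι → ℝ) → ℝ) (x : ι → ℝ) : (ι → ℝ) → ℝ := fun y' => (F x y') ^ 2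

variable {F : (ι → ℝ) → (ι → ℝ) → ℝ} {U : Set (ι → ℝ)} {x : ι → ℝ}

lemma phi_cd (hF : IsFinslerMetric U F) (hx : x ∈ U) {y' : ι → ℝ} (hy' : y' ≠ 0) :
    ContDiffAt ℝ ∞ (Phi F x) y' := by
  have hopen : IsOpen (U ×ˢ {y : ι → ℝ | y ≠ 0}) := hF.isOpen.prod isOpen_ne
  have h1 : ContDiffAt ℝ (⊤ : ℕ∞) (fun p : (ι → ℝ) × (ι → ℝ) => F p.1 p.2) (x, y') :=
    hF.smooth.contDiffAt (hopen.mem_nhds (Set.mk_mem_prod hx hy'))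
  have h2 : ContDiffAt ℝ (⊤ : ℕ∞) (fun y'' => F x y'') y' :=
    h1.comp y' (ContDiffAt.prodMk contDiffAt_const contDiffAt_id)
  exact (h2.pow 2).of_le (by simp)

lemma dPhi (hF : IsFinslerMetric U F) (hx : x ∈ U) {y' : ι → ℝ} (hy' : y' ≠ 0) :
    DifferentiableAt ℝ (Phi F x) y' :=
  (phi_cd hF hx hy').differentiableAt (by simp)

lemma dPsi (hF : IsFinslerMetric U F) (hx : x ∈ U) {y' : ι → ℝ} (hy' : y' ≠ 0) :
    DifferentiableAt ℝ (fderiv ℝ (Phi F x)) y' :=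
  (((phi_cd hF hx hy').fderiv_right (m := ∞) (by simp))).differentiableAt (by simp)

lemma dPsi2 (hF : IsFinslerMetric U F) (hx : x ∈ U) {y' : ι → ℝ} (hy' : y' ≠ 0) :
    DifferentiableAt ℝ (fderiv ℝ (fderiv ℝ (Phi F x))) y' :=
  ((((phi_cd hF hx hy').fderiv_right (m := ∞) (by simp))).fderiv_right (m := ∞)
    (by simp)).differentiableAt (by simp)

lemma phi_homog (hF : IsFinslerMetric U F) (hx : x ∈ U) (y' : ι → ℝ) {t : ℝ} (ht : 0 < t) :
    Phi F x (t • y') = t ^ 2 * Phi F x y' := by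
  simp only [Phi]
  rw [hF.homog x hx y' t ht, mul_pow]

lemma fderiv_homog (hF : IsFinslerMetric U F) (hx : x ∈ U) {y' : ι → ℝ} (hy' : y' ≠ 0)
    {t : ℝ} (ht : 0 < t) :
    fderiv ℝ (Phi F x) (t • y') = t • fderiv ℝ (Phi F x) y' := by
  have hty : t • y' ≠ 0 := smul_ne_zero ht.ne' hy'
  have hfun : (fun z => Phi F x (t • z)) = fun z => t ^ 2 • Phi F x z := by
    funext z
    rw [phi_homog hF hx z ht, smul_eq_mul]
  have hl : fderiv ℝ (fun z => Phi F x (t • z)) y' = t • fderiv ℝ (Phi F x) (t • y') :=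
    fderiv_comp_const_smul t (dPhi hF hx hty)
  have hr : fderiv ℝ (fun z => t ^ 2 • Phi F x z) y' = t ^ 2 • fderiv ℝ (Phi F x) y' :=
    fderiv_fun_const_smul (dPhi hF hx hy') _
  have key : t • fderiv ℝ (Phi F x) (t • y') = t ^ 2 • fderiv ℝ (Phi F x) y' := by
    rw [← hl, hfun, hr]
  have := congrArg (fun A => t⁻¹ • A) key
  simp only [smul_smul] at this
  rw [inv_mul_cancel₀ ht.ne', one_smul] at this
  rw [this]
  congr 1
  rw [sq, ← mul_assoc, inv_mul_cancel₀ ht.ne', one_mul]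

lemma fderiv2_homog (hF : IsFinslerMetric U F) (hx : x ∈ U) {y : ι → ℝ} (hy : y ≠ 0)
    {t : ℝ} (ht : 0 < t) :
    fderiv ℝ (fderiv ℝ (Phi F x)) (t • y) = fderiv ℝ (fderiv ℝ (Phi F x)) y := by
  have hty : t • y ≠ 0 := smul_ne_zero ht.ne' hy
  have hev : (fun z => fderiv ℝ (Phi F x) (t • z)) =ᶠ[nhds y]
      fun z => t • fderiv ℝ (Phi F x) z := by
    filter_upwards [IsOpen.mem_nhds isOpen_ne hy] with z hz
    exact fderiv_homog hF hx hz ht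
  have hl : fderiv ℝ (fun z => fderiv ℝ (Phi F x) (t • z)) y
      = t • fderiv ℝ (fderiv ℝ (Phi F x)) (t • y) :=
    fderiv_comp_const_smul t (dPsi hF hx hty)
  have hr : fderiv ℝ (fun z => t • fderiv ℝ (Phi F x) z) y
      = t • fderiv ℝ (fderiv ℝ (Phi F x)) y :=
    fderiv_fun_const_smul (dPsi hF hx hy) t
  have := Filter.EventuallyEq.fderiv_eq (𝕜 := ℝ) hev
  rw [hl, hr] at this
  exact smul_right_injective _ ht.ne' this

lemma euler1 (hF : IsFinslerMetric U F) (hx : x ∈ U) {y : ι → ℝ} (hy : y ≠ 0) :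
    fderiv ℝ (Phi F x) y y = 2 * Phi F x y := by
  have := euler_ray (dPhi hF hx hy).hasFDerivAt 2
    (fun t ht => by rw [phi_homog hF hx y ht, smul_eq_mul])
  simpa using this

lemma euler2 (hF : IsFinslerMetric U F) (hx : x ∈ U) {y : ι → ℝ} (hy : y ≠ 0) :
    fderiv ℝ (fderiv ℝ (Phi F x)) y y = fderiv ℝ (Phi F x) y := by
  have := euler_ray (dPsi hF hx hy).hasFDerivAt 1
    (fun t ht => by rw [fderiv_homog hF hx hy ht, pow_one])
  simpa using this

lemma euler3 (hF : IsFinslerMetric U F) (hx : x ∈ U) {y : ι → ℝ} (hy : y ≠ 0) :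
    fderiv ℝ (fderiv ℝ (fderiv ℝ (Phi F x))) y y = 0 := by
  have := euler_ray (W := (ι → ℝ) →L[ℝ] (ι → ℝ) →L[ℝ] ℝ) (dPsi2 hF hx hy).hasFDerivAt 0
    (fun t ht => by rw [fderiv2_homog hF hx hy ht, pow_zero, one_smul])
  rw [this, Nat.cast_zero]
  exact zero_smul ℝ (fderiv ℝ (fderiv ℝ (Phi F x)) y)

lemma sym2 (hF : IsFinslerMetric U F) (hx : x ∈ U) {y : ι → ℝ} (hy : y ≠ 0)
    (a b : ι → ℝ) :
    fderiv ℝ (fderiv ℝ (Phi F x)) y a b = fderiv ℝ (fderiv ℝ (Phi F x)) y b a := by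
  refine second_derivative_symmetric_of_eventually (f := Phi F x) ?_ (dPsi hF hx hy).hasFDerivAt a b
  filter_upwards [IsOpen.mem_nhds isOpen_ne hy] with z hz
  exact (dPhi hF hx hz).hasFDerivAt

lemma sym3 (hF : IsFinslerMetric U F) (hx : x ∈ U) {y : ι → ℝ} (hy : y ≠ 0)
    (a b : ι → ℝ) :
    fderiv ℝ (fderiv ℝ (fderiv ℝ (Phi F x))) y a b
      = fderiv ℝ (fderiv ℝ (fderiv ℝ (Phi F x))) y b a := by
  refine second_derivative_symmetric_of_eventually (f := fderiv ℝ (Phi F x)) ?_ (dPsi2 hF hx hy).hasFDerivAt a b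
  filter_upwards [IsOpen.mem_nhds isOpen_ne hy] with z hz
  exact (dPsi hF hx hz).hasFDerivAt

lemma fTensor_eq (hF : IsFinslerMetric U F) (hx : x ∈ U) {y' : ι → ℝ} (hy' : y' ≠ 0)
    (i j : ι) :
    fTensor F i j x y' = (1/2) *
      fderiv ℝ (fderiv ℝ (Phi F x)) y' (Pi.single i 1) (Pi.single j 1) := by
  have key : fderiv ℝ (fun y'' => fderiv ℝ (Phi F x) y'' (Pi.single j 1)) y' (Pi.single i 1)
      = fderiv ℝ (fderiv ℝ (Phi F x)) y' (Pi.single i 1) (Pi.single j 1) := by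
    rw [fderiv_clm_apply (dPsi hF hx hy') (differentiableAt_const _)]
    simp
  simp only [fTensor, pdy]
  exact congrArg (fun r => (1/2 : ℝ) * r) key

lemma cartan_eq (hF : IsFinslerMetric U F) (hx : x ∈ U) {y : ι → ℝ} (hy : y ≠ 0)
    (i j k : ι) :
    cartan F i j k x y = (1/4) *
      fderiv ℝ (fderiv ℝ (fderiv ℝ (Phi F x))) y
        (Pi.single k 1) (Pi.single i 1) (Pi.single j 1) := by
  have hc1 : DifferentiableAt ℝ
      (fun y' => fderiv ℝ (fderiv ℝ (Phi F x)) y' (Pi.single i 1)) y :=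
    (dPsi2 hF hx hy).clm_apply (differentiableAt_const _)
  have hc2 : DifferentiableAt ℝ
      (fun y' => fderiv ℝ (fderiv ℝ (Phi F x)) y' (Pi.single i 1) (Pi.single j 1)) y :=
    hc1.clm_apply (differentiableAt_const _)
  have hev : (fun y' => fTensor F i j x y') =ᶠ[nhds y]
      fun y' => (1/2) * fderiv ℝ (fderiv ℝ (Phi F x)) y' (Pi.single i 1) (Pi.single j 1) := by
    filter_upwards [IsOpen.mem_nhds isOpen_ne hy] with z hz
    exact fTensor_eq hF hx hz i j
  have key : fderiv ℝ (fun y' => fTensor F i j x y') y (Pi.single k 1)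
      = (1/2) * fderiv ℝ (fderiv ℝ (fderiv ℝ (Phi F x))) y
          (Pi.single k 1) (Pi.single i 1) (Pi.single j 1) := by
    rw [Filter.EventuallyEq.fderiv_eq (𝕜 := ℝ) hev]
    rw [fderiv_const_mul hc2 (1/2 : ℝ)]
    have h2 : fderiv ℝ
        (fun y' => fderiv ℝ (fderiv ℝ (Phi F x)) y' (Pi.single i 1) (Pi.single j 1)) y
          (Pi.single k 1)
        = fderiv ℝ (fderiv ℝ (fderiv ℝ (Phi F x))) y
            (Pi.single k 1) (Pi.single i 1) (Pi.single j 1) := by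
      rw [fderiv_clm_apply hc1 (differentiableAt_const _),
        fderiv_clm_apply (dPsi2 hF hx hy) (differentiableAt_const _)]
      simp
    simp only [ContinuousLinearMap.smul_apply, smul_eq_mul]
    rw [h2]
  simp only [cartan, pdy]
  rw [key]
  ring

lemma cartan_eq' (hF : IsFinslerMetric U F) (hx : x ∈ U) {y : ι → ℝ} (hy : y ≠ 0)
    (i j k : ι) :
    cartan F i j k x y = (1/4) *
      fderiv ℝ (fderiv ℝ (fderiv ℝ (Phi F x))) y
        (Pi.single i 1) (Pi.single k 1) (Pi.single j 1) := by
  rw [cartan_eq hF hx hy i j k]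
  have := congrArg (fun L : (ι → ℝ) →L[ℝ] ℝ => L (Pi.single j 1))
    (sym3 hF hx hy (Pi.single k 1) (Pi.single i 1))
  rw [this]

lemma dfT (hF : IsFinslerMetric U F) (hx : x ∈ U) {y : ι → ℝ} (hy : y ≠ 0) (i j : ι) :
    DifferentiableAt ℝ (fun y' => fTensor F i j x y') y := by
  have hc2 : DifferentiableAt ℝ
      (fun y' => (1/2 : ℝ) * fderiv ℝ (fderiv ℝ (Phi F x)) y' (Pi.single i 1) (Pi.single j 1)) y :=
    (((dPsi2 hF hx hy).clm_apply (differentiableAt_const _)).clm_apply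
      (differentiableAt_const _)).const_mul _
  have hev : (fun y' => (1/2 : ℝ) * fderiv ℝ (fderiv ℝ (Phi F x)) y' (Pi.single i 1) (Pi.single j 1))
      =ᶠ[nhds y] (fun y' => fTensor F i j x y') := by
    filter_upwards [IsOpen.mem_nhds isOpen_ne hy] with z hz
    exact (fTensor_eq hF hx hz i j).symm
  exact hc2.congr_of_eventuallyEq hev.symm

lemma sum_fTensor_y (hF : IsFinslerMetric U F) (hx : x ∈ U) {y : ι → ℝ} (hy : y ≠ 0)
    (i : ι) :
    ∑ j, fTensor F i j x y * y j = (1/2) * fderiv ℝ (Phi F x) y (Pi.single i 1) := by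
  have h1 : ∀ j, fTensor F i j x y * y j
      = (1/2) * (y j • (fderiv ℝ (fderiv ℝ (Phi F x)) y (Pi.single i 1)) (Pi.single j 1)) := by
    intro j
    rw [fTensor_eq hF hx hy i j, smul_eq_mul]
    ring
  rw [Finset.sum_congr rfl fun j _ => h1 j, ← Finset.mul_sum]
  congr 1
  have : ∑ j, y j • (fderiv ℝ (fderiv ℝ (Phi F x)) y (Pi.single i 1)) (Pi.single j 1)
      = (fderiv ℝ (fderiv ℝ (Phi F x)) y (Pi.single i 1)) y := by
    simp_rw [← map_smul, ← map_sum, sum_smul_single]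
  rw [this, sym2 hF hx hy (Pi.single i 1) y, euler2 hF hx hy]

lemma sum_sum_fTensor (hF : IsFinslerMetric U F) (hx : x ∈ U) {y : ι → ℝ} (hy : y ≠ 0) :
    ∑ i, ∑ j, fTensor F i j x y * y i * y j = Phi F x y := by
  have h1 : ∀ i, ∑ j, fTensor F i j x y * y i * y j
      = y i * ((1/2) * fderiv ℝ (Phi F x) y (Pi.single i 1)) := by
    intro i
    rw [← sum_fTensor_y hF hx hy i, Finset.mul_sum]
    exact Finset.sum_congr rfl fun j _ => by ring
  rw [Finset.sum_congr rfl fun i _ => h1 i]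
  have h2 : ∑ i, y i * ((1/2) * fderiv ℝ (Phi F x) y (Pi.single i 1))
      = (1/2) * ∑ i, y i • fderiv ℝ (Phi F x) y (Pi.single i 1) := by
    rw [Finset.mul_sum]
    exact Finset.sum_congr rfl fun i _ => by rw [smul_eq_mul]; ring
  rw [h2, clm_sum_single (fderiv ℝ (Phi F x) y) y, euler1 hF hx hy]
  ring

lemma sum_y_lowerY (hF : IsFinslerMetric U F) (hx : x ∈ U) {y : ι → ℝ} (hy : y ≠ 0) :
    ∑ i, y i * lowerY F i x y = Phi F x y := by
  have h : ∀ i, y i * lowerY F i x y = ∑ j, fTensor F i j x y * y i * y j := by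
    intro i
    simp only [lowerY]
    rw [Finset.mul_sum]
    exact Finset.sum_congr rfl fun j _ => by ring
  rw [Finset.sum_congr rfl fun i _ => h i]
  exact sum_sum_fTensor hF hx hy

lemma phi_pos (hF : IsFinslerMetric U F) (hx : x ∈ U) {y : ι → ℝ} (hy : y ≠ 0) :
    0 < Phi F x y := by
  have h := hF.posdef x hx y hy y hy
  calc (0:ℝ) < ∑ i, ∑ j, fTensor F i j x y * y i * y j := h
  _ = Phi F x y := sum_sum_fTensor hF hx hy

lemma sum_cartan_last (hF : IsFinslerMetric U F) (hx : x ∈ U) {y : ι → ℝ} (hy : y ≠ 0)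
    (i j : ι) :
    ∑ k, cartan F i j k x y * y k = 0 := by
  have h2 : (∑ k, y k • fderiv ℝ (fderiv ℝ (fderiv ℝ (Phi F x))) y (Pi.single k 1)) = 0 := by
    rw [clm_sum_single (W := (ι → ℝ) →L[ℝ] (ι → ℝ) →L[ℝ] ℝ)]
    exact euler3 hF hx hy
  have h1 : ∀ k, cartan F i j k x y * y k
      = (1/4) * ((y k • fderiv ℝ (fderiv ℝ (fderiv ℝ (Phi F x))) y (Pi.single k 1))
          (Pi.single i 1) (Pi.single j 1)) := by
    intro k
    rw [cartan_eq hF hx hy i j k]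
    simp only [ContinuousLinearMap.smul_apply, smul_eq_mul]
    ring
  rw [Finset.sum_congr rfl fun k _ => h1 k, ← Finset.mul_sum]
  have h3 : ∑ k, ((y k • fderiv ℝ (fderiv ℝ (fderiv ℝ (Phi F x))) y (Pi.single k 1))
      (Pi.single i 1) (Pi.single j 1))
      = ((∑ k, y k • fderiv ℝ (fderiv ℝ (fderiv ℝ (Phi F x))) y (Pi.single k 1))
          (Pi.single i 1) (Pi.single j 1)) := by
    simp [ContinuousLinearMap.sum_apply]
  rw [h3, h2]
  simp

lemma sum_cartan_first (hF : IsFinslerMetric U F) (hx : x ∈ U) {y : ι → ℝ} (hy : y ≠ 0)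
    (j k : ι) :
    ∑ i, y i * cartan F i j k x y = 0 := by
  have h2 : (∑ i, y i • fderiv ℝ (fderiv ℝ (fderiv ℝ (Phi F x))) y (Pi.single i 1)) = 0 := by
    rw [clm_sum_single (W := (ι → ℝ) →L[ℝ] (ι → ℝ) →L[ℝ] ℝ)]
    exact euler3 hF hx hy
  have h1 : ∀ i, y i * cartan F i j k x y
      = (1/4) * ((y i • fderiv ℝ (fderiv ℝ (fderiv ℝ (Phi F x))) y (Pi.single i 1))
          (Pi.single k 1) (Pi.single j 1)) := by
    intro i
    rw [cartan_eq' hF hx hy i j k]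
    simp only [ContinuousLinearMap.smul_apply, smul_eq_mul]
    ring
  rw [Finset.sum_congr rfl fun i _ => h1 i, ← Finset.mul_sum]
  have h3 : ∑ i, ((y i • fderiv ℝ (fderiv ℝ (fderiv ℝ (Phi F x))) y (Pi.single i 1))
      (Pi.single k 1) (Pi.single j 1))
      = ((∑ i, y i • fderiv ℝ (fderiv ℝ (fderiv ℝ (Phi F x))) y (Pi.single i 1))
          (Pi.single k 1) (Pi.single j 1)) := by
    simp [ContinuousLinearMap.sum_apply]
  rw [h3, h2]
  simp

lemma sum_y_meanCartan (hF : IsFinslerMetric U F) (hx : x ∈ U) {y : ι → ℝ} (hy : y ≠ 0) :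
    ∑ i, y i * meanCartan F i x y = 0 := by
  simp only [meanCartan, Finset.mul_sum]
  rw [Finset.sum_comm]
  refine Finset.sum_eq_zero fun b _ => ?_
  rw [Finset.sum_comm]
  refine Finset.sum_eq_zero fun c _ => ?_
  have : ∑ i, y i * (gInv F x y b c * cartan F i b c x y)
      = gInv F x y b c * ∑ i, y i * cartan F i b c x y := by
    rw [Finset.mul_sum]
    exact Finset.sum_congr rfl fun i _ => by ring
  rw [this, sum_cartan_first hF hx hy b c, mul_zero]

lemma gMat_det_ne (hF : IsFinslerMetric U F) (hx : x ∈ U) {y : ι → ℝ} (hy : y ≠ 0) :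
    (gMat F x y).det ≠ 0 := by
  intro h
  obtain ⟨w, hw, hmul⟩ := (Matrix.exists_mulVec_eq_zero_iff).mpr h
  have hpos := hF.posdef x hx y hy w hw
  have heq : ∑ i, ∑ j, fTensor F i j x y * w i * w j
      = ∑ i, w i * ((gMat F x y).mulVec w i) := by
    refine Finset.sum_congr rfl fun i _ => ?_
    simp only [Matrix.mulVec, dotProduct, gMat, Matrix.of_apply]
    rw [Finset.mul_sum]
    exact Finset.sum_congr rfl fun j _ => by ring
  rw [heq, hmul] at hpos
  simp at hpos

end coord

section twistedAux

variable {n₁ n₂ : ℕ}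

def P1 (n₁ n₂ : ℕ) : ((Fin n₁ ⊕ Fin n₂) → ℝ) →L[ℝ] (Fin n₁ → ℝ) :=
  LinearMap.toContinuousLinearMap (LinearMap.funLeft ℝ ℝ Sum.inl)

def P2 (n₁ n₂ : ℕ) : ((Fin n₁ ⊕ Fin n₂) → ℝ) →L[ℝ] (Fin n₂ → ℝ) :=
  LinearMap.toContinuousLinearMap (LinearMap.funLeft ℝ ℝ Sum.inr)

lemma P1_apply (Y : (Fin n₁ ⊕ Fin n₂) → ℝ) : P1 n₁ n₂ Y = Y ∘ Sum.inl := rfl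
lemma P2_apply (Y : (Fin n₁ ⊕ Fin n₂) → ℝ) : P2 n₁ n₂ Y = Y ∘ Sum.inr := rfl

lemma P1_single_inl (j : Fin n₁) :
    P1 n₁ n₂ (Pi.single (Sum.inl j) 1) = Pi.single j 1 := by
  funext k
  rw [P1_apply]
  simp [Function.comp, Pi.single_apply]

lemma P1_single_inr (β : Fin n₂) :
    P1 n₁ n₂ (Pi.single (Sum.inr β) 1) = 0 := by
  funext k
  rw [P1_apply]
  simp [Function.comp, Pi.single_apply]

lemma P2_single_inr (β : Fin n₂) :
    P2 n₁ n₂ (Pi.single (Sum.inr β) 1) = Pi.single β 1 := by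
  funext k
  rw [P2_apply]
  simp [Function.comp, Pi.single_apply]

lemma P2_single_inl (j : Fin n₁) :
    P2 n₁ n₂ (Pi.single (Sum.inl j) 1) = 0 := by
  funext k
  rw [P2_apply]
  simp [Function.comp, Pi.single_apply]

lemma fderiv_comp_P1 {W : Type*} [NormedAddCommGroup W] [NormedSpace ℝ W]
    {H : (Fin n₁ → ℝ) → W} {Y : (Fin n₁ ⊕ Fin n₂) → ℝ}
    (hH : DifferentiableAt ℝ H (Y ∘ Sum.inl)) :
    fderiv ℝ (fun Y' => H (Y' ∘ Sum.inl)) Y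
      = (fderiv ℝ H (Y ∘ Sum.inl)).comp (P1 n₁ n₂) := by
  have h0 : HasFDerivAt H (fderiv ℝ H (Y ∘ Sum.inl)) (P1 n₁ n₂ Y) := hH.hasFDerivAt
  exact (h0.comp Y ((P1 n₁ n₂).hasFDerivAt)).fderiv

lemma fderiv_comp_P2 {W : Type*} [NormedAddCommGroup W] [NormedSpace ℝ W]
    {H : (Fin n₂ → ℝ) → W} {Y : (Fin n₁ ⊕ Fin n₂) → ℝ}
    (hH : DifferentiableAt ℝ H (Y ∘ Sum.inr)) :
    fderiv ℝ (fun Y' => H (Y' ∘ Sum.inr)) Y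
      = (fderiv ℝ H (Y ∘ Sum.inr)).comp (P2 n₁ n₂) := by
  have h0 : HasFDerivAt H (fderiv ℝ H (Y ∘ Sum.inr)) (P2 n₁ n₂ Y) := hH.hasFDerivAt
  exact (h0.comp Y ((P2 n₁ n₂).hasFDerivAt)).fderiv

lemma diff_comp_P1 {W : Type*} [NormedAddCommGroup W] [NormedSpace ℝ W]
    {H : (Fin n₁ → ℝ) → W} {Y : (Fin n₁ ⊕ Fin n₂) → ℝ}
    (hH : DifferentiableAt ℝ H (Y ∘ Sum.inl)) :
    DifferentiableAt ℝ (fun Y' => H (Y' ∘ Sum.inl)) Y :=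
  hH.comp Y (P1 n₁ n₂).differentiableAt

lemma diff_comp_P2 {W : Type*} [NormedAddCommGroup W] [NormedSpace ℝ W]
    {H : (Fin n₂ → ℝ) → W} {Y : (Fin n₁ ⊕ Fin n₂) → ℝ}
    (hH : DifferentiableAt ℝ H (Y ∘ Sum.inr)) :
    DifferentiableAt ℝ (fun Y' => H (Y' ∘ Sum.inr)) Y :=
  hH.comp Y (P2 n₁ n₂).differentiableAt

end twistedAux

end
end Stmt7Aux
set_option maxHeartbeats 1000000 in
open Stmt7Aux in
theorem stmt_7 {n₁ n₂ : ℕ} {U₁ : Set (Fin n₁ → ℝ)} {U₂ : Set (Fin n₂ → ℝ)}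
    {F₁ : (Fin n₁ → ℝ) → (Fin n₁ → ℝ) → ℝ}
    {F₂ : (Fin n₂ → ℝ) → (Fin n₂ → ℝ) → ℝ}
    {f : (Fin n₁ → ℝ) → (Fin n₂ → ℝ) → ℝ}
    (hF₁ : IsFinslerMetric U₁ F₁) (hF₂ : IsFinslerMetric U₂ F₂)
    (hf : ContDiffOn ℝ (⊤ : ℕ∞) (fun p : (Fin n₁ → ℝ) × (Fin n₂ → ℝ) => f p.1 p.2) (U₁ ×ˢ U₂))
    (hfpos : ∀ x ∈ U₁, ∀ u ∈ U₂, 0 < f x u)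
 :
    ∀ x ∈ U₁, ∀ u ∈ U₂, ∀ (y : Fin n₁ → ℝ) (v : Fin n₂ → ℝ), y ≠ 0 → v ≠ 0 →
      (∀ α : Fin n₂,
        (∑ j, ∑ k, y j * y k *
            matsumoto (n₁ + n₂) (twisted F₁ F₂ f) (Sum.inr α) (Sum.inl j) (Sum.inl k)
              (Sum.elim x u) (Sum.elim y v))
          = -((f x u)^2 * (F₁ x y)^2 * (F₂ u v)^2
                / (((n₁ : ℝ) + (n₂ : ℝ) + 1)
                  * (twisted F₁ F₂ f (Sum.elim x u) (Sum.elim y v))^2))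
              * meanCartan F₂ α u v)
      ∧ (∀ i : Fin n₁,
        (∑ β, ∑ μ, v β * v μ *
            matsumoto (n₁ + n₂) (twisted F₁ F₂ f) (Sum.inl i) (Sum.inr β) (Sum.inr μ)
              (Sum.elim x u) (Sum.elim y v))
          = -((f x u)^2 * (F₁ x y)^2 * (F₂ u v)^2
                / (((n₁ : ℝ) + (n₂ : ℝ) + 1)
                  * (twisted F₁ F₂ f (Sum.elim x u) (Sum.elim y v))^2))
              * meanCartan F₁ i x y) := by
  intro x hx u hu y v hy hv
  have hc : (0:ℝ) < f x u ^ 2 := pow_pos (hfpos x hx u hu) 2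
  have hXinl : Sum.elim x u ∘ Sum.inl = x := Sum.elim_comp_inl x u
  have hXinr : Sum.elim x u ∘ Sum.inr = u := Sum.elim_comp_inr x u
  have hYinl : Sum.elim y v ∘ Sum.inl = y := Sum.elim_comp_inl y v
  have hYinr : Sum.elim y v ∘ Sum.inr = v := Sum.elim_comp_inr y v
  have htw : ∀ B : (Fin n₁ ⊕ Fin n₂) → ℝ,
      (twisted F₁ F₂ f (Sum.elim x u) B) ^ 2
        = Phi F₁ x (B ∘ Sum.inl) + (f x u ^ 2) * Phi F₂ u (B ∘ Sum.inr) := by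
    intro B
    simp only [twisted, hXinl, hXinr]
    rw [Real.sq_sqrt]
    · rfl
    · have h1 := hF₁.nonneg x hx (B ∘ Sum.inl)
      have h2 := hF₂.nonneg u hu (B ∘ Sum.inr)
      positivity
  have hNopen : IsOpen {Y : (Fin n₁ ⊕ Fin n₂) → ℝ | Y ∘ Sum.inl ≠ 0 ∧ Y ∘ Sum.inr ≠ 0} := by
    have h1 : IsOpen {Y : (Fin n₁ ⊕ Fin n₂) → ℝ | Y ∘ Sum.inl ≠ 0} :=
      isOpen_ne.preimage (P1 n₁ n₂).continuous
    have h2 : IsOpen {Y : (Fin n₁ ⊕ Fin n₂) → ℝ | Y ∘ Sum.inr ≠ 0} :=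
      isOpen_ne.preimage (P2 n₁ n₂).continuous
    exact h1.inter h2
  have hYN1 : (Sum.elim y v : (Fin n₁ ⊕ Fin n₂) → ℝ) ∘ Sum.inl ≠ 0 := by rw [hYinl]; exact hy
  have hYN2 : (Sum.elim y v : (Fin n₁ ⊕ Fin n₂) → ℝ) ∘ Sum.inr ≠ 0 := by rw [hYinr]; exact hv
  have hYnhds : {Y : (Fin n₁ ⊕ Fin n₂) → ℝ | Y ∘ Sum.inl ≠ 0 ∧ Y ∘ Sum.inr ≠ 0}
      ∈ nhds (Sum.elim y v) := hNopen.mem_nhds ⟨hYN1, hYN2⟩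
  -- first fiber derivative of the squared twisted metric
  have dsum : ∀ Y : (Fin n₁ ⊕ Fin n₂) → ℝ, Y ∘ Sum.inl ≠ 0 → Y ∘ Sum.inr ≠ 0 →
      fderiv ℝ (fun B => (twisted F₁ F₂ f (Sum.elim x u) B) ^ 2) Y
        = (fderiv ℝ (Phi F₁ x) (Y ∘ Sum.inl)).comp (P1 n₁ n₂)
          + (f x u ^ 2) • (fderiv ℝ (Phi F₂ u) (Y ∘ Sum.inr)).comp (P2 n₁ n₂) := by
    intro Y h1 h2
    have hfun : (fun B => (twisted F₁ F₂ f (Sum.elim x u) B) ^ 2)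
        = fun B => Phi F₁ x (B ∘ Sum.inl) + (f x u ^ 2) * Phi F₂ u (B ∘ Sum.inr) :=
      funext htw
    rw [hfun]
    have d1 : DifferentiableAt ℝ
        (fun B : (Fin n₁ ⊕ Fin n₂) → ℝ => Phi F₁ x (B ∘ Sum.inl)) Y :=
      diff_comp_P1 (dPhi hF₁ hx h1)
    have d2 : DifferentiableAt ℝ
        (fun B : (Fin n₁ ⊕ Fin n₂) → ℝ => Phi F₂ u (B ∘ Sum.inr)) Y :=
      diff_comp_P2 (dPhi hF₂ hu h2)
    rw [fderiv_fun_add d1 (d2.const_mul _), fderiv_const_mul d2 _,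
      fderiv_comp_P1 (dPhi hF₁ hx h1), fderiv_comp_P2 (dPhi hF₂ hu h2)]
  -- fiber partial derivatives of the squared twisted metric
  have hq1 : ∀ (j : Fin n₁) (Y : (Fin n₁ ⊕ Fin n₂) → ℝ), Y ∘ Sum.inl ≠ 0 → Y ∘ Sum.inr ≠ 0 →
      fderiv ℝ (fun B => (twisted F₁ F₂ f (Sum.elim x u) B) ^ 2) Y (Pi.single (Sum.inl j) 1)
        = fderiv ℝ (Phi F₁ x) (Y ∘ Sum.inl) (Pi.single j 1) := by
    intro j Y h1 h2
    rw [dsum Y h1 h2]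
    simp [P1_single_inl, P2_single_inl]
  have hq2 : ∀ (β : Fin n₂) (Y : (Fin n₁ ⊕ Fin n₂) → ℝ), Y ∘ Sum.inl ≠ 0 → Y ∘ Sum.inr ≠ 0 →
      fderiv ℝ (fun B => (twisted F₁ F₂ f (Sum.elim x u) B) ^ 2) Y (Pi.single (Sum.inr β) 1)
        = (f x u ^ 2) * fderiv ℝ (Phi F₂ u) (Y ∘ Sum.inr) (Pi.single β 1) := by
    intro β Y h1 h2
    rw [dsum Y h1 h2]
    simp [P1_single_inr, P2_single_inr]
  -- fundamental tensor of the twisted metric: block structure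
  have hfT11 : ∀ (i j : Fin n₁) (Y : (Fin n₁ ⊕ Fin n₂) → ℝ), Y ∘ Sum.inl ≠ 0 → Y ∘ Sum.inr ≠ 0 →
      fTensor (twisted F₁ F₂ f) (Sum.inl i) (Sum.inl j) (Sum.elim x u) Y
        = fTensor F₁ i j x (Y ∘ Sum.inl) := by
    intro i j Y h1 h2
    simp only [fTensor, pdy]
    have hev : (fun Y' => fderiv ℝ (fun B => (twisted F₁ F₂ f (Sum.elim x u) B) ^ 2) Y'
          (Pi.single (Sum.inl j) 1))
        =ᶠ[nhds Y] fun Y' =>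
          (fun y' => fderiv ℝ (Phi F₁ x) y' (Pi.single j 1)) (Y' ∘ Sum.inl) := by
      filter_upwards [hNopen.mem_nhds ⟨h1, h2⟩] with Z hZ
      exact hq1 j Z hZ.1 hZ.2
    rw [Filter.EventuallyEq.fderiv_eq (𝕜 := ℝ) hev,
      fderiv_comp_P1 ((dPsi hF₁ hx h1).clm_apply (differentiableAt_const _)),
      ContinuousLinearMap.comp_apply, P1_single_inl]
    rfl
  have hfT12 : ∀ (i : Fin n₁) (β : Fin n₂) (Y : (Fin n₁ ⊕ Fin n₂) → ℝ),
      Y ∘ Sum.inl ≠ 0 → Y ∘ Sum.inr ≠ 0 →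
      fTensor (twisted F₁ F₂ f) (Sum.inl i) (Sum.inr β) (Sum.elim x u) Y = 0 := by
    intro i β Y h1 h2
    simp only [fTensor, pdy]
    have hev : (fun Y' => fderiv ℝ (fun B => (twisted F₁ F₂ f (Sum.elim x u) B) ^ 2) Y'
          (Pi.single (Sum.inr β) 1))
        =ᶠ[nhds Y] fun Y' =>
          (f x u ^ 2) * (fun y' => fderiv ℝ (Phi F₂ u) y' (Pi.single β 1)) (Y' ∘ Sum.inr) := by
      filter_upwards [hNopen.mem_nhds ⟨h1, h2⟩] with Z hZ
      exact hq2 β Z hZ.1 hZ.2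
    rw [Filter.EventuallyEq.fderiv_eq (𝕜 := ℝ) hev,
      fderiv_const_mul (diff_comp_P2 ((dPsi hF₂ hu h2).clm_apply (differentiableAt_const _))) _,
      fderiv_comp_P2 ((dPsi hF₂ hu h2).clm_apply (differentiableAt_const _))]
    simp [P2_single_inl]
  have hfT21 : ∀ (α : Fin n₂) (j : Fin n₁) (Y : (Fin n₁ ⊕ Fin n₂) → ℝ),
      Y ∘ Sum.inl ≠ 0 → Y ∘ Sum.inr ≠ 0 →
      fTensor (twisted F₁ F₂ f) (Sum.inr α) (Sum.inl j) (Sum.elim x u) Y = 0 := by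
    intro α j Y h1 h2
    simp only [fTensor, pdy]
    have hev : (fun Y' => fderiv ℝ (fun B => (twisted F₁ F₂ f (Sum.elim x u) B) ^ 2) Y'
          (Pi.single (Sum.inl j) 1))
        =ᶠ[nhds Y] fun Y' =>
          (fun y' => fderiv ℝ (Phi F₁ x) y' (Pi.single j 1)) (Y' ∘ Sum.inl) := by
      filter_upwards [hNopen.mem_nhds ⟨h1, h2⟩] with Z hZ
      exact hq1 j Z hZ.1 hZ.2
    rw [Filter.EventuallyEq.fderiv_eq (𝕜 := ℝ) hev,
      fderiv_comp_P1 ((dPsi hF₁ hx h1).clm_apply (differentiableAt_const _))]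
    simp [P1_single_inr]
  have hfT22 : ∀ (α β : Fin n₂) (Y : (Fin n₁ ⊕ Fin n₂) → ℝ),
      Y ∘ Sum.inl ≠ 0 → Y ∘ Sum.inr ≠ 0 →
      fTensor (twisted F₁ F₂ f) (Sum.inr α) (Sum.inr β) (Sum.elim x u) Y
        = (f x u ^ 2) * fTensor F₂ α β u (Y ∘ Sum.inr) := by
    intro α β Y h1 h2
    simp only [fTensor, pdy]
    have hev : (fun Y' => fderiv ℝ (fun B => (twisted F₁ F₂ f (Sum.elim x u) B) ^ 2) Y'
          (Pi.single (Sum.inr β) 1))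
        =ᶠ[nhds Y] fun Y' =>
          (f x u ^ 2) * (fun y' => fderiv ℝ (Phi F₂ u) y' (Pi.single β 1)) (Y' ∘ Sum.inr) := by
      filter_upwards [hNopen.mem_nhds ⟨h1, h2⟩] with Z hZ
      exact hq2 β Z hZ.1 hZ.2
    rw [Filter.EventuallyEq.fderiv_eq (𝕜 := ℝ) hev,
      fderiv_const_mul (diff_comp_P2 ((dPsi hF₂ hu h2).clm_apply (differentiableAt_const _))) _,
      fderiv_comp_P2 ((dPsi hF₂ hu h2).clm_apply (differentiableAt_const _))]
    simp only [ContinuousLinearMap.smul_apply, ContinuousLinearMap.comp_apply,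
      P2_single_inr, smul_eq_mul]
    show (1/2:ℝ) * (f x u ^ 2 *
        fderiv ℝ (fun y' => fderiv ℝ (Phi F₂ u) y' (Pi.single β 1)) (Y ∘ Sum.inr)
          (Pi.single α 1))
      = f x u ^ 2 * ((1/2:ℝ) *
        fderiv ℝ (fun y' => fderiv ℝ (Phi F₂ u) y' (Pi.single β 1)) (Y ∘ Sum.inr)
          (Pi.single α 1))
    ring
  -- Cartan tensor entries of the twisted metric at the base point
  have hC111 : ∀ i j k : Fin n₁,
      cartan (twisted F₁ F₂ f) (Sum.inl i) (Sum.inl j) (Sum.inl k)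
        (Sum.elim x u) (Sum.elim y v) = cartan F₁ i j k x y := by
    intro i j k
    simp only [cartan, pdy]
    have hev : (fun Y' => fTensor (twisted F₁ F₂ f) (Sum.inl i) (Sum.inl j) (Sum.elim x u) Y')
        =ᶠ[nhds (Sum.elim y v)]
        fun Y' => (fun y' => fTensor F₁ i j x y') (Y' ∘ Sum.inl) := by
      filter_upwards [hYnhds] with Z hZ
      exact hfT11 i j Z hZ.1 hZ.2
    have hd : DifferentiableAt ℝ (fun y' => fTensor F₁ i j x y')
        ((Sum.elim y v : (Fin n₁ ⊕ Fin n₂) → ℝ) ∘ Sum.inl) := by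
      rw [hYinl]; exact dfT hF₁ hx hy i j
    rw [Filter.EventuallyEq.fderiv_eq (𝕜 := ℝ) hev, fderiv_comp_P1 hd,
      ContinuousLinearMap.comp_apply, P1_single_inl, hYinl]
  have hCm1 : ∀ (α : Fin n₂) (j k : Fin n₁),
      cartan (twisted F₁ F₂ f) (Sum.inr α) (Sum.inl j) (Sum.inl k)
        (Sum.elim x u) (Sum.elim y v) = 0 := by
    intro α j k
    simp only [cartan, pdy]
    have hev : (fun Y' => fTensor (twisted F₁ F₂ f) (Sum.inr α) (Sum.inl j) (Sum.elim x u) Y')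
        =ᶠ[nhds (Sum.elim y v)] (fun _ => (0:ℝ)) := by
      filter_upwards [hYnhds] with Z hZ
      exact hfT21 α j Z hZ.1 hZ.2
    rw [Filter.EventuallyEq.fderiv_eq (𝕜 := ℝ) hev]
    simp
  have hCm2 : ∀ (i : Fin n₁) (β μ : Fin n₂),
      cartan (twisted F₁ F₂ f) (Sum.inl i) (Sum.inr β) (Sum.inr μ)
        (Sum.elim x u) (Sum.elim y v) = 0 := by
    intro i β μ
    simp only [cartan, pdy]
    have hev : (fun Y' => fTensor (twisted F₁ F₂ f) (Sum.inl i) (Sum.inr β) (Sum.elim x u) Y')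
        =ᶠ[nhds (Sum.elim y v)] (fun _ => (0:ℝ)) := by
      filter_upwards [hYnhds] with Z hZ
      exact hfT12 i β Z hZ.1 hZ.2
    rw [Filter.EventuallyEq.fderiv_eq (𝕜 := ℝ) hev]
    simp
  have hC222 : ∀ α β μ : Fin n₂,
      cartan (twisted F₁ F₂ f) (Sum.inr α) (Sum.inr β) (Sum.inr μ)
        (Sum.elim x u) (Sum.elim y v) = (f x u ^ 2) * cartan F₂ α β μ u v := by
    intro α β μ
    simp only [cartan, pdy]
    have hev : (fun Y' => fTensor (twisted F₁ F₂ f) (Sum.inr α) (Sum.inr β) (Sum.elim x u) Y')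
        =ᶠ[nhds (Sum.elim y v)]
        fun Y' => (f x u ^ 2) * (fun v' => fTensor F₂ α β u v') (Y' ∘ Sum.inr) := by
      filter_upwards [hYnhds] with Z hZ
      exact hfT22 α β Z hZ.1 hZ.2
    have hd : DifferentiableAt ℝ (fun v' => fTensor F₂ α β u v')
        ((Sum.elim y v : (Fin n₁ ⊕ Fin n₂) → ℝ) ∘ Sum.inr) := by
      rw [hYinr]; exact dfT hF₂ hu hv α β
    rw [Filter.EventuallyEq.fderiv_eq (𝕜 := ℝ) hev,
      fderiv_const_mul (diff_comp_P2 hd) _, fderiv_comp_P2 hd]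
    simp only [ContinuousLinearMap.smul_apply, ContinuousLinearMap.comp_apply,
      P2_single_inr, smul_eq_mul, hYinr]
    ring
  -- matrix structure
  have hdetA : IsUnit (gMat F₁ x y).det := isUnit_iff_ne_zero.mpr (gMat_det_ne hF₁ hx hy)
  have hdetB : IsUnit (gMat F₂ u v).det := isUnit_iff_ne_zero.mpr (gMat_det_ne hF₂ hu hv)
  have hA : gMat (twisted F₁ F₂ f) (Sum.elim x u) (Sum.elim y v)
      = Matrix.fromBlocks (gMat F₁ x y) 0 0 ((f x u ^ 2) • gMat F₂ u v) := by
    ext a b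
    cases a with
    | inl i =>
      cases b with
      | inl j =>
        have := hfT11 i j _ hYN1 hYN2
        rw [hYinl] at this
        simpa [gMat] using this
      | inr β =>
        have := hfT12 i β _ hYN1 hYN2
        simpa [gMat] using this
    | inr α =>
      cases b with
      | inl j =>
        have := hfT21 α j _ hYN1 hYN2
        simpa [gMat] using this
      | inr β =>
        have := hfT22 α β _ hYN1 hYN2
        rw [hYinr] at this
        simpa [gMat] using this
  have hInv : gInv (twisted F₁ F₂ f) (Sum.elim x u) (Sum.elim y v)
      = Matrix.fromBlocks (gInv F₁ x y) 0 0 ((f x u ^ 2)⁻¹ • gInv F₂ u v) := by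
    simp only [gInv]
    rw [hA]
    apply Matrix.inv_eq_left_inv
    rw [Matrix.fromBlocks_multiply]
    have h1 : (gMat F₁ x y)⁻¹ * gMat F₁ x y = 1 := Matrix.nonsing_inv_mul _ hdetA
    have h2 : ((f x u ^ 2)⁻¹ • (gMat F₂ u v)⁻¹) * ((f x u ^ 2) • gMat F₂ u v) = 1 := by
      rw [Matrix.smul_mul, Matrix.mul_smul, smul_smul, inv_mul_cancel₀ hc.ne', one_smul,
        Matrix.nonsing_inv_mul _ hdetB]
    simp [h1, h2, Matrix.fromBlocks_one]
  have hInv11 : ∀ j k : Fin n₁,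
      gInv (twisted F₁ F₂ f) (Sum.elim x u) (Sum.elim y v) (Sum.inl j) (Sum.inl k)
        = gInv F₁ x y j k := by
    intro j k; rw [hInv]; rfl
  have hInv12 : ∀ (j : Fin n₁) (β : Fin n₂),
      gInv (twisted F₁ F₂ f) (Sum.elim x u) (Sum.elim y v) (Sum.inl j) (Sum.inr β) = 0 := by
    intro j β; rw [hInv]; rfl
  have hInv21 : ∀ (β : Fin n₂) (j : Fin n₁),
      gInv (twisted F₁ F₂ f) (Sum.elim x u) (Sum.elim y v) (Sum.inr β) (Sum.inl j) = 0 := by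
    intro β j; rw [hInv]; rfl
  have hInv22 : ∀ β μ : Fin n₂,
      gInv (twisted F₁ F₂ f) (Sum.elim x u) (Sum.elim y v) (Sum.inr β) (Sum.inr μ)
        = (f x u ^ 2)⁻¹ * gInv F₂ u v β μ := by
    intro β μ; rw [hInv]; rfl
  -- mean Cartan torsion of the twisted metric
  have hIinr : ∀ α : Fin n₂,
      meanCartan (twisted F₁ F₂ f) (Sum.inr α) (Sum.elim x u) (Sum.elim y v)
        = meanCartan F₂ α u v := by
    intro α
    simp only [meanCartan, Fintype.sum_sum_type, hCm1, hInv12, hInv21, hInv22, hC222,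
      mul_zero, zero_mul, Finset.sum_const_zero, add_zero, zero_add]
    refine Finset.sum_congr rfl fun β _ => Finset.sum_congr rfl fun μ _ => ?_
    field_simp [(hfpos x hx u hu).ne']
  have hIinl : ∀ i : Fin n₁,
      meanCartan (twisted F₁ F₂ f) (Sum.inl i) (Sum.elim x u) (Sum.elim y v)
        = meanCartan F₁ i x y := by
    intro i
    simp only [meanCartan, Fintype.sum_sum_type, hC111, hCm2, hInv11, hInv12, hInv21,
      mul_zero, zero_mul, Finset.sum_const_zero, add_zero, zero_add]
  -- lowered fiber variable
  have hL1 : ∀ j : Fin n₁,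
      lowerY (twisted F₁ F₂ f) (Sum.inl j) (Sum.elim x u) (Sum.elim y v)
        = lowerY F₁ j x y := by
    intro j
    simp only [lowerY, Fintype.sum_sum_type]
    have h1 : ∀ k : Fin n₁,
        fTensor (twisted F₁ F₂ f) (Sum.inl j) (Sum.inl k) (Sum.elim x u) (Sum.elim y v)
          * (Sum.elim y v (Sum.inl k)) = fTensor F₁ j k x y * y k := by
      intro k
      have := hfT11 j k _ hYN1 hYN2
      rw [hYinl] at this
      rw [this, Sum.elim_inl]
    have h2 : ∀ β : Fin n₂,
        fTensor (twisted F₁ F₂ f) (Sum.inl j) (Sum.inr β) (Sum.elim x u) (Sum.elim y v)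
          * (Sum.elim y v (Sum.inr β)) = 0 := by
      intro β
      rw [hfT12 j β _ hYN1 hYN2, zero_mul]
    rw [Finset.sum_congr rfl fun k _ => h1 k, Finset.sum_congr rfl fun β _ => h2 β]
    simp
  have hL2 : ∀ α : Fin n₂,
      lowerY (twisted F₁ F₂ f) (Sum.inr α) (Sum.elim x u) (Sum.elim y v)
        = (f x u ^ 2) * lowerY F₂ α u v := by
    intro α
    simp only [lowerY, Fintype.sum_sum_type]
    have h1 : ∀ k : Fin n₁,
        fTensor (twisted F₁ F₂ f) (Sum.inr α) (Sum.inl k) (Sum.elim x u) (Sum.elim y v)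
          * (Sum.elim y v (Sum.inl k)) = 0 := by
      intro k
      rw [hfT21 α k _ hYN1 hYN2, zero_mul]
    have h2 : ∀ β : Fin n₂,
        fTensor (twisted F₁ F₂ f) (Sum.inr α) (Sum.inr β) (Sum.elim x u) (Sum.elim y v)
          * (Sum.elim y v (Sum.inr β)) = (f x u ^ 2) * (fTensor F₂ α β u v * v β) := by
      intro β
      have := hfT22 α β _ hYN1 hYN2
      rw [hYinr] at this
      rw [this, Sum.elim_inr]
      ring
    rw [Finset.sum_congr rfl fun k _ => h1 k, Finset.sum_congr rfl fun β _ => h2 β]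
    rw [← Finset.mul_sum]
    simp
  -- numeric facts
  have hP : 0 < Phi F₁ x y := phi_pos hF₁ hx hy
  have hQ : 0 < Phi F₂ u v := phi_pos hF₂ hu hv
  have hT2 : (twisted F₁ F₂ f (Sum.elim x u) (Sum.elim y v)) ^ 2
      = Phi F₁ x y + f x u ^ 2 * Phi F₂ u v := by
    rw [htw (Sum.elim y v), hYinl, hYinr]
  have hT2pos : (0:ℝ) < Phi F₁ x y + f x u ^ 2 * Phi F₂ u v :=
    add_pos hP (mul_pos hc hQ)
  have hcast : ((n₁ + n₂ : ℕ) : ℝ) = (n₁ : ℝ) + (n₂ : ℝ) := by push_cast; ring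
  have hne1 : ((n₁ : ℝ) + (n₂ : ℝ) + 1) ≠ 0 := by positivity
  have hPdef : (F₁ x y) ^ 2 = Phi F₁ x y := rfl
  have hQdef : (F₂ u v) ^ 2 = Phi F₂ u v := rfl
  have s1 : ∑ j, ∑ k, fTensor F₁ j k x y * y j * y k = Phi F₁ x y :=
    sum_sum_fTensor hF₁ hx hy
  have s2 : ∑ j, y j * lowerY F₁ j x y = Phi F₁ x y := sum_y_lowerY hF₁ hx hy
  have s3 : ∑ j, y j * meanCartan F₁ j x y = 0 := sum_y_meanCartan hF₁ hx hy
  have s1' : ∑ β, ∑ μ, fTensor F₂ β μ u v * v β * v μ = Phi F₂ u v :=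
    sum_sum_fTensor hF₂ hu hv
  have s2' : ∑ β, v β * lowerY F₂ β u v = Phi F₂ u v := sum_y_lowerY hF₂ hu hv
  have s3' : ∑ β, v β * meanCartan F₂ β u v = 0 := sum_y_meanCartan hF₂ hu hv
  constructor
  · -- first identity
    intro α
    have e1 : ∀ j k : Fin n₁,
        y j * y k * matsumoto (n₁ + n₂) (twisted F₁ F₂ f) (Sum.inr α) (Sum.inl j) (Sum.inl k)
          (Sum.elim x u) (Sum.elim y v)
        = (-(1/(((n₁ + n₂ : ℕ) : ℝ) + 1)) * meanCartan F₂ α u v)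
              * (fTensor F₁ j k x y * y j * y k)
          + ((1/(((n₁ + n₂ : ℕ) : ℝ) + 1)) * meanCartan F₂ α u v
              * (Phi F₁ x y + f x u ^ 2 * Phi F₂ u v)⁻¹)
              * ((y j * lowerY F₁ j x y) * (y k * lowerY F₁ k x y))
          + ((1/(((n₁ + n₂ : ℕ) : ℝ) + 1)) * (Phi F₁ x y + f x u ^ 2 * Phi F₂ u v)⁻¹
              * (f x u ^ 2 * lowerY F₂ α u v))
              * ((y j * meanCartan F₁ j x y) * (y k * lowerY F₁ k x y))
          + ((1/(((n₁ + n₂ : ℕ) : ℝ) + 1)) * (Phi F₁ x y + f x u ^ 2 * Phi F₂ u v)⁻¹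
              * (f x u ^ 2 * lowerY F₂ α u v))
              * ((y j * lowerY F₁ j x y) * (y k * meanCartan F₁ k x y)) := by
      intro j k
      simp only [matsumoto, angular]
      rw [hCm1 α j k, hIinr α, hIinl j, hIinl k, hL1 j, hL1 k, hL2 α,
        hfT11 j k _ hYN1 hYN2, hfT21 α j _ hYN1 hYN2, hfT21 α k _ hYN1 hYN2, hYinl, hT2]
      ring
    have t2 : ∑ j, ∑ k, ((y j * lowerY F₁ j x y) * (y k * lowerY F₁ k x y))
        = (∑ j, y j * lowerY F₁ j x y) * (∑ k, y k * lowerY F₁ k x y) := by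
      rw [Finset.sum_mul_sum]
    have t3 : ∑ j, ∑ k, ((y j * meanCartan F₁ j x y) * (y k * lowerY F₁ k x y))
        = (∑ j, y j * meanCartan F₁ j x y) * (∑ k, y k * lowerY F₁ k x y) := by
      rw [Finset.sum_mul_sum]
    have t4 : ∑ j, ∑ k, ((y j * lowerY F₁ j x y) * (y k * meanCartan F₁ k x y))
        = (∑ j, y j * lowerY F₁ j x y) * (∑ k, y k * meanCartan F₁ k x y) := by
      rw [Finset.sum_mul_sum]
    calc (∑ j, ∑ k, y j * y k *
            matsumoto (n₁ + n₂) (twisted F₁ F₂ f) (Sum.inr α) (Sum.inl j) (Sum.inl k)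
              (Sum.elim x u) (Sum.elim y v))
        = (-(1/(((n₁ + n₂ : ℕ) : ℝ) + 1)) * meanCartan F₂ α u v)
              * (∑ j, ∑ k, fTensor F₁ j k x y * y j * y k)
          + ((1/(((n₁ + n₂ : ℕ) : ℝ) + 1)) * meanCartan F₂ α u v
              * (Phi F₁ x y + f x u ^ 2 * Phi F₂ u v)⁻¹)
              * (∑ j, ∑ k, ((y j * lowerY F₁ j x y) * (y k * lowerY F₁ k x y)))
          + ((1/(((n₁ + n₂ : ℕ) : ℝ) + 1)) * (Phi F₁ x y + f x u ^ 2 * Phi F₂ u v)⁻¹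
              * (f x u ^ 2 * lowerY F₂ α u v))
              * (∑ j, ∑ k, ((y j * meanCartan F₁ j x y) * (y k * lowerY F₁ k x y)))
          + ((1/(((n₁ + n₂ : ℕ) : ℝ) + 1)) * (Phi F₁ x y + f x u ^ 2 * Phi F₂ u v)⁻¹
              * (f x u ^ 2 * lowerY F₂ α u v))
              * (∑ j, ∑ k, ((y j * lowerY F₁ j x y) * (y k * meanCartan F₁ k x y))) := by
          rw [Finset.sum_congr rfl fun j _ => Finset.sum_congr rfl fun k _ => e1 j k]
          simp only [Finset.sum_add_distrib, ← Finset.mul_sum]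
      _ = -((f x u)^2 * (F₁ x y)^2 * (F₂ u v)^2
            / (((n₁ : ℝ) + (n₂ : ℝ) + 1)
              * (twisted F₁ F₂ f (Sum.elim x u) (Sum.elim y v))^2))
          * meanCartan F₂ α u v := by
          rw [s1, t2, t3, t4, s2, s3, hT2, hcast, hPdef, hQdef]
          field_simp
          ring
  · -- second identity
    intro i
    have e2 : ∀ β μ : Fin n₂,
        v β * v μ * matsumoto (n₁ + n₂) (twisted F₁ F₂ f) (Sum.inl i) (Sum.inr β) (Sum.inr μ)
          (Sum.elim x u) (Sum.elim y v)
        = (-(1/(((n₁ + n₂ : ℕ) : ℝ) + 1)) * meanCartan F₁ i x y * (f x u ^ 2))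
              * (fTensor F₂ β μ u v * v β * v μ)
          + ((1/(((n₁ + n₂ : ℕ) : ℝ) + 1)) * meanCartan F₁ i x y
              * (Phi F₁ x y + f x u ^ 2 * Phi F₂ u v)⁻¹ * (f x u ^ 2) * (f x u ^ 2))
              * ((v β * lowerY F₂ β u v) * (v μ * lowerY F₂ μ u v))
          + ((1/(((n₁ + n₂ : ℕ) : ℝ) + 1)) * (Phi F₁ x y + f x u ^ 2 * Phi F₂ u v)⁻¹
              * (f x u ^ 2 * lowerY F₁ i x y))
              * ((v β * meanCartan F₂ β u v) * (v μ * lowerY F₂ μ u v))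
          + ((1/(((n₁ + n₂ : ℕ) : ℝ) + 1)) * (Phi F₁ x y + f x u ^ 2 * Phi F₂ u v)⁻¹
              * (f x u ^ 2 * lowerY F₁ i x y))
              * ((v β * lowerY F₂ β u v) * (v μ * meanCartan F₂ μ u v)) := by
      intro β μ
      simp only [matsumoto, angular]
      rw [hCm2 i β μ, hIinl i, hIinr β, hIinr μ, hL1 i, hL2 β, hL2 μ,
        hfT22 β μ _ hYN1 hYN2, hfT12 i β _ hYN1 hYN2, hfT12 i μ _ hYN1 hYN2, hYinr, hT2]
      ring
    have t2 : ∑ β, ∑ μ, ((v β * lowerY F₂ β u v) * (v μ * lowerY F₂ μ u v))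
        = (∑ β, v β * lowerY F₂ β u v) * (∑ μ, v μ * lowerY F₂ μ u v) := by
      rw [Finset.sum_mul_sum]
    have t3 : ∑ β, ∑ μ, ((v β * meanCartan F₂ β u v) * (v μ * lowerY F₂ μ u v))
        = (∑ β, v β * meanCartan F₂ β u v) * (∑ μ, v μ * lowerY F₂ μ u v) := by
      rw [Finset.sum_mul_sum]
    have t4 : ∑ β, ∑ μ, ((v β * lowerY F₂ β u v) * (v μ * meanCartan F₂ μ u v))
        = (∑ β, v β * lowerY F₂ β u v) * (∑ μ, v μ * meanCartan F₂ μ u v) := by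
      rw [Finset.sum_mul_sum]
    calc (∑ β, ∑ μ, v β * v μ *
            matsumoto (n₁ + n₂) (twisted F₁ F₂ f) (Sum.inl i) (Sum.inr β) (Sum.inr μ)
              (Sum.elim x u) (Sum.elim y v))
        = (-(1/(((n₁ + n₂ : ℕ) : ℝ) + 1)) * meanCartan F₁ i x y * (f x u ^ 2))
              * (∑ β, ∑ μ, fTensor F₂ β μ u v * v β * v μ)
          + ((1/(((n₁ + n₂ : ℕ) : ℝ) + 1)) * meanCartan F₁ i x y
              * (Phi F₁ x y + f x u ^ 2 * Phi F₂ u v)⁻¹ * (f x u ^ 2) * (f x u ^ 2))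
              * (∑ β, ∑ μ, ((v β * lowerY F₂ β u v) * (v μ * lowerY F₂ μ u v)))
          + ((1/(((n₁ + n₂ : ℕ) : ℝ) + 1)) * (Phi F₁ x y + f x u ^ 2 * Phi F₂ u v)⁻¹
              * (f x u ^ 2 * lowerY F₁ i x y))
              * (∑ β, ∑ μ, ((v β * meanCartan F₂ β u v) * (v μ * lowerY F₂ μ u v)))
          + ((1/(((n₁ + n₂ : ℕ) : ℝ) + 1)) * (Phi F₁ x y + f x u ^ 2 * Phi F₂ u v)⁻¹
              * (f x u ^ 2 * lowerY F₁ i x y))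
              * (∑ β, ∑ μ, ((v β * lowerY F₂ β u v) * (v μ * meanCartan F₂ μ u v))) := by
          rw [Finset.sum_congr rfl fun β _ => Finset.sum_congr rfl fun μ _ => e2 β μ]
          simp only [Finset.sum_add_distrib, ← Finset.mul_sum]
      _ = -((f x u)^2 * (F₁ x y)^2 * (F₂ u v)^2
            / (((n₁ : ℝ) + (n₂ : ℝ) + 1)
              * (twisted F₁ F₂ f (Sum.elim x u) (Sum.elim y v))^2))
          * meanCartan F₁ i x y := by
          rw [s1', t2, t3, t4, s2', s3', hT2, hcast, hPdef, hQdef]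
          field_simp
          ring
end
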